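/- arXiv:2001.11632 — 12 statements merged into one kernel-verified Lean document; each statement's English description precedes it below -/
import Mathlib

section
/- For every positive integer m, the equation m = 3x^2 + 2xy + 3y^2 has a solution in integers x, y if and only if both of the following hold: (1) for every prime q with q ≡ 5 or 7 (mod 8), the q-adic valuation of m is even; and (2) either (a) m is odd and the total number of prime factors of m (counted with multiplicity) that are congruent to 3 mod 8 is odd, or (b) the 2-adic valuation of m is at least 2. -/
/-!
Since `3x² + 2xy + 3y² = (x - y)² + 2(x + y)²`, the integers represented by the form are the norms
`a² + 2b²` of elements of `ℤ[√-2]` with `a + b` even, and for a norm `m` the parity of `a + b` is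
determined by `m`: it is even iff `m ≡ 3 (mod 8)` or `4 ∣ m`.

`ℤ[√-2]` is norm-Euclidean, so a prime `p` for which `-2` is a square mod `p` (i.e. `p = 2` or
`p ≡ 1, 3 (mod 8)`) is not prime in `ℤ[√-2]`, hence is a norm. A prime `q ≡ 5, 7 (mod 8)` dividing
`a² + 2b²` divides `a` and `b`. Hence `m > 0` is a norm iff every such `q` divides `m` to an even
power; in that case, for odd `m`, `m ≡ 3 ^ S (mod 8)` where `S` counts the prime factors
`≡ 3 (mod 8)`.
-/

open Zsqrtd

theorem Int.four_mul_sq_bmod_le (x : ℤ) {m : ℕ} (hm : 0 < m) : 4 * x.bmod m ^ 2 ≤ (m : ℤ) ^ 2 := by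
  have hle := Int.le_bmod (x := x) hm
  have hge := Int.bmod_le (x := x) hm
  have h1 : 0 ≤ (m : ℤ) - 2 * x.bmod m := by omega
  have h2 : 0 ≤ (m : ℤ) + 2 * x.bmod m := by omega
  nlinarith [mul_nonneg h1 h2]

namespace Zsqrtd

variable {d : ℤ}

/-- `x / y = x * star y / y.norm`, rounded coordinatewise to a nearest integer. -/
def bdiv (x y : ℤ√d) : ℤ√d :=
  ⟨(x * star y).re.bdiv y.norm.natAbs, (x * star y).im.bdiv y.norm.natAbs⟩

theorem sub_mul_bdiv_mul_star (hd : d ≤ 0) (x y : ℤ√d) :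
    (x - y * bdiv x y) * star y =
      ⟨(x * star y).re.bmod y.norm.natAbs, (x * star y).im.bmod y.norm.natAbs⟩ := by
  have hN : ((y.norm.natAbs : ℤ) : ℤ√d) = y * star y := by
    rw [Int.natAbs_of_nonneg (norm_nonneg hd y), norm_eq_mul_conj]
  have : (x - y * bdiv x y) * star y = x * star y - ((y.norm.natAbs : ℤ) : ℤ√d) * bdiv x y := by
    rw [hN]; ring
  rw [this]
  ext <;> simp [bdiv, Int.bmod_eq_self_sub_mul_bdiv]

theorem norm_sub_mul_bdiv_lt (hd : d < 0) (hd2 : -2 ≤ d) (x : ℤ√d) {y : ℤ√d} (hy : y ≠ 0) :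
    (x - y * bdiv x y).norm < y.norm := by
  have hN : 0 < y.norm := (norm_nonneg hd.le y).lt_of_ne' ((norm_eq_zero_iff hd y).not.mpr hy)
  have hNabs : 0 < y.norm.natAbs := Int.natAbs_pos.mpr hN.ne'
  have hre := Int.four_mul_sq_bmod_le (x * star y).re hNabs
  have him := Int.four_mul_sq_bmod_le (x * star y).im hNabs
  rw [Int.natAbs_of_nonneg (norm_nonneg hd.le y)] at hre him
  set a := (x * star y).re.bmod y.norm.natAbs
  set b := (x * star y).im.bmod y.norm.natAbs
  have hnorm : (x - y * bdiv x y).norm * y.norm = a * a - d * b * b := by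
    rw [← norm_conj y, ← norm_mul, sub_mul_bdiv_mul_star hd.le, norm_def]
  -- `4 * (remainder norm) * y.norm ≤ (1 - d) * y.norm ^ 2`, and `1 - d < 4` as `-2 ≤ d`
  nlinarith [mul_nonneg (neg_nonneg.mpr hd.le) (sub_nonneg.mpr him),
    mul_nonneg (show (0:ℤ) ≤ d + 2 by omega) (sq_nonneg b)]

theorem natAbs_norm_le_natAbs_norm_mul (hd : d < 0) (x : ℤ√d) {y : ℤ√d} (hy : y ≠ 0) :
    x.norm.natAbs ≤ (x * y).norm.natAbs := by
  rw [norm_mul, Int.natAbs_mul]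
  exact Nat.le_mul_of_pos_right _ (Int.natAbs_pos.mpr ((norm_eq_zero_iff hd y).not.mpr hy))

theorem not_prime_natCast_of_dvd_sq_sub {p : ℕ} (hp : 1 < p) {a : ℤ} (h : (p : ℤ) ∣ a ^ 2 - d) :
    ¬Prime (p : ℤ√d) := by
  intro hprime
  have hfactor : ((a ^ 2 - d : ℤ) : ℤ√d) = ⟨a, 1⟩ * ⟨a, -1⟩ := by
    ext <;> simp only [re_mul, im_mul, re_intCast, im_intCast] <;> ring
  have hdvd : (p : ℤ√d) ∣ ⟨a, 1⟩ * ⟨a, -1⟩ := by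
    rw [← hfactor, ← Int.cast_natCast]; exact (intCast_dvd_intCast _ _).mpr h
  have hp1 : ¬(p : ℤ) ∣ 1 := by
    rw [Int.natCast_dvd_ofNat, Nat.dvd_one]; omega
  rcases hprime.dvd_or_dvd hdvd with hdvd | hdvd <;>
    rw [← Int.cast_natCast, intCast_dvd] at hdvd
  · exact hp1 hdvd.2
  · exact hp1 (dvd_neg.mp hdvd.2)

theorem exists_norm_eq_of_not_irreducible (hd : d ≤ 0) {p : ℕ} (hp : p.Prime)
    (hpi : ¬Irreducible (p : ℤ√d)) : ∃ z : ℤ√d, z.norm = p := by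
  have hpu : ¬IsUnit (p : ℤ√d) := by
    rw [← norm_eq_one_iff, norm_natCast, Int.natAbs_mul, Int.natAbs_natCast, mul_eq_one]
    exact fun h => hp.one_lt.ne' h.1
  obtain ⟨a, b, hpab, hau, hbu⟩ : ∃ a b, (p : ℤ√d) = a * b ∧ ¬IsUnit a ∧ ¬IsUnit b := by
    simpa [irreducible_iff, hpu, not_forall, not_or] using hpi
  have hnorm : a.norm.natAbs * b.norm.natAbs = p ^ 2 := by
    rw [← Int.natAbs_mul, ← norm_mul, ← hpab, norm_natCast, Int.natAbs_mul, Int.natAbs_natCast, sq]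
  have hna := ((hp.mul_eq_prime_sq_iff (mt norm_eq_one_iff.1 hau)
    (mt norm_eq_one_iff.1 hbu)).1 hnorm).1
  exact ⟨a, by rw [← hna, Int.natAbs_of_nonneg (norm_nonneg hd a)]⟩

abbrev euclideanDomain (hd : d < 0) (hd2 : -2 ≤ d) : EuclideanDomain (ℤ√d) :=
  { Zsqrtd.commRing, Zsqrtd.nontrivial with
    quotient := bdiv
    remainder := fun x y => x - y * bdiv x y
    quotient_zero := fun x => by ext <;> simp [bdiv]
    quotient_mul_add_remainder_eq := fun x y => by ring
    r := _
    r_wellFounded := (measure (Int.natAbs ∘ norm)).wf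
    remainder_lt := fun x y hy =>
      Int.natAbs_lt_natAbs_of_nonneg_of_lt (norm_nonneg hd.le _) (norm_sub_mul_bdiv_lt hd hd2 x hy)
    mul_left_not_lt := fun x y hy => not_lt_of_ge (natAbs_norm_le_natAbs_norm_mul hd x hy) }

instance : EuclideanDomain (ℤ√(-2)) := euclideanDomain (by norm_num) (by norm_num)

theorem exists_norm_eq_of_prime {p : ℕ} (hp : p.Prime) (h : p = 2 ∨ p % 8 = 1 ∨ p % 8 = 3) :
    ∃ z : ℤ√(-2), z.norm = p := by
  rcases h with rfl | h
  · exact ⟨⟨0, 1⟩, by simp [norm_def]⟩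
  have := Fact.mk hp
  obtain ⟨r, hr⟩ := (ZMod.exists_sq_eq_neg_two_iff (by omega)).mpr h
  obtain ⟨a, rfl⟩ := ZMod.intCast_surjective r
  have hdvd : (p : ℤ) ∣ a ^ 2 - (-2) := by
    rw [← ZMod.intCast_zmod_eq_zero_iff_dvd]; push_cast; rw [sq, ← hr]; ring
  refine exists_norm_eq_of_not_irreducible (by norm_num) hp fun hirr => ?_
  exact not_prime_natCast_of_dvd_sq_sub hp.one_lt hdvd hirr.prime


theorem natCast_dvd_of_dvd_norm {q : ℕ} (hq : q.Prime) (hq8 : q % 8 = 5 ∨ q % 8 = 7)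
    {z : ℤ√(-2)} (h : (q : ℤ) ∣ z.norm) : (q : ℤ√(-2)) ∣ z := by
  have := Fact.mk hq
  have hz : (z.re : ZMod q) ^ 2 + 2 * (z.im : ZMod q) ^ 2 = 0 := by
    rw [← ZMod.intCast_zmod_eq_zero_iff_dvd, norm_def] at h
    push_cast at h
    linear_combination h
  have him : (z.im : ZMod q) = 0 := by
    by_contra him
    have hsq : IsSquare (-2 : ZMod q) := ⟨z.re / z.im, by field_simp; linear_combination -hz⟩
    have := (ZMod.exists_sq_eq_neg_two_iff (by omega)).mp hsq
    omega
  have hre : (z.re : ZMod q) = 0 := by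
    simpa [him] using hz
  rw [← Int.cast_natCast, intCast_dvd]
  exact ⟨(ZMod.intCast_zmod_eq_zero_iff_dvd _ _).mp hre,
    (ZMod.intCast_zmod_eq_zero_iff_dvd _ _).mp him⟩

theorem even_factorization_of_norm_eq {q : ℕ} (hq : q.Prime) (hq8 : q % 8 = 5 ∨ q % 8 = 7)
    (m : ℕ) : ∀ {z : ℤ√(-2)}, z.norm = m → Even (m.factorization q) := by
  induction m using Nat.strong_induction_on with
  | _ m ih =>
  intro z hz
  rcases eq_or_ne m 0 with rfl | hm
  · simp
  by_cases hqm : ¬q ∣ m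
  · simp [Nat.factorization_eq_zero_of_not_dvd hqm]
  rw [not_not] at hqm
  obtain ⟨w, rfl⟩ := natCast_dvd_of_dvd_norm hq hq8 (hz ▸ Int.natCast_dvd_natCast.mpr hqm)
  have hw : (q : ℤ) ^ 2 * w.norm = m := by rw [← hz, norm_mul, norm_natCast, sq]
  have hwm : q ^ 2 * w.norm.natAbs = m := by
    rw [← Int.natAbs_of_nonneg (norm_nonneg (by norm_num) w)] at hw; exact_mod_cast hw
  have hw0 : w.norm.natAbs ≠ 0 := by rintro h; rw [h, mul_zero] at hwm; exact hm hwm.symm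
  have hlt : w.norm.natAbs < m := by
    rw [← hwm]; exact lt_mul_left (Nat.pos_of_ne_zero hw0) (Nat.one_lt_pow two_ne_zero hq.one_lt)
  have hfac : m.factorization q = 2 + w.norm.natAbs.factorization q := by
    rw [← hwm, Nat.factorization_mul (pow_ne_zero 2 hq.ne_zero) hw0, Finsupp.add_apply,
      hq.factorization_pow, Finsupp.single_eq_same]
  rw [hfac]
  exact even_two.add (ih _ hlt (Int.natAbs_of_nonneg (norm_nonneg (by norm_num) w)).symm)

theorem exists_norm_eq_of_even_factorization {m : ℕ} (hm : m ≠ 0)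
    (H : ∀ q : ℕ, q.Prime → (q % 8 = 5 ∨ q % 8 = 7) → Even (m.factorization q)) :
    ∃ z : ℤ√(-2), z.norm = m := by
  suffices (m : ℤ) ∈ MonoidHom.mrange (normMonoidHom (d := -2)) from this
  rw [← Nat.prod_factorization_pow_eq_self hm, Finsupp.prod, Nat.cast_prod]
  refine Submonoid.prod_mem _ fun p hp => ?_
  have hp : p.Prime := Nat.prime_of_mem_primeFactors (Nat.support_factorization m ▸ hp)
  rw [Nat.cast_pow]
  by_cases hp8 : p = 2 ∨ p % 8 = 1 ∨ p % 8 = 3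
  · exact Submonoid.pow_mem _ (exists_norm_eq_of_prime hp hp8) _
  · obtain ⟨k, hk⟩ := H p hp (by have := hp.eq_two_or_odd; omega)
    exact ⟨((p ^ k : ℕ) : ℤ√(-2)), by rw [hk, pow_add]; exact_mod_cast norm_natCast (p ^ k)⟩

theorem exists_norm_eq_iff {m : ℕ} (hm : m ≠ 0) :
    (∃ z : ℤ√(-2), z.norm = m) ↔
      ∀ q : ℕ, q.Prime → (q % 8 = 5 ∨ q % 8 = 7) → Even (m.factorization q) :=
  ⟨fun ⟨_, hz⟩ _ hq hq8 => even_factorization_of_norm_eq hq hq8 m hz,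
    exists_norm_eq_of_even_factorization hm⟩

end Zsqrtd

theorem exists_eq_three_mul_sq_add_iff (n : ℤ) :
    (∃ x y : ℤ, n = 3 * x ^ 2 + 2 * x * y + 3 * y ^ 2) ↔
      ∃ z : ℤ√(-2), z.norm = n ∧ Even (z.re + z.im) := by
  constructor
  · rintro ⟨x, y, rfl⟩
    exact ⟨⟨x - y, x + y⟩, by rw [norm_def]; ring, ⟨x, by ring⟩⟩
  · rintro ⟨⟨a, b⟩, rfl, k, hk⟩
    refine ⟨k, b - k, ?_⟩
    rw [norm_def]
    obtain rfl : a = k + k - b := by dsimp only at hk; omega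
    ring

theorem even_re_add_im_iff (z : ℤ√(-2)) : Even (z.re + z.im) ↔ z.norm % 8 = 3 ∨ 4 ∣ z.norm := by
  obtain ⟨a, b⟩ := z
  have hnorm : (⟨a, b⟩ : ℤ√(-2)).norm = a ^ 2 + 2 * b ^ 2 := by rw [norm_def]; ring
  have hmod : (a ^ 2 + 2 * b ^ 2) % 8 = ((a % 8) ^ 2 + 2 * (b % 8) ^ 2) % 8 := by
    simp [sq, Int.add_emod, Int.mul_emod]
  rw [Int.even_iff, Int.dvd_iff_emod_eq_zero, ← Int.emod_emod_of_dvd _ (by norm_num : (4 : ℤ) ∣ 8),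
    hnorm, hmod, show (a + b) % 2 = (a % 8 + b % 8) % 2 by omega]
  have ha := Int.emod_nonneg a (by norm_num : (8 : ℤ) ≠ 0)
  have ha' := Int.emod_lt_of_pos a (by norm_num : (0 : ℤ) < 8)
  have hb := Int.emod_nonneg b (by norm_num : (8 : ℤ) ≠ 0)
  have hb' := Int.emod_lt_of_pos b (by norm_num : (0 : ℤ) < 8)
  interval_cases (a % 8) <;> interval_cases (b % 8) <;> decide

theorem natCast_zmod_eight_sq_of_odd {n : ℕ} (hn : Odd n) : (n : ZMod 8) ^ 2 = 1 := by
  rw [← ZMod.natCast_mod]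
  have : n % 8 = 1 ∨ n % 8 = 3 ∨ n % 8 = 5 ∨ n % 8 = 7 := by rcases hn with ⟨k, rfl⟩; omega
  rcases this with h | h | h | h <;> rw [h] <;> decide

theorem natCast_zmod_eight_eq_three_pow {m : ℕ} (hm : Odd m)
    (H : ∀ q : ℕ, q.Prime → (q % 8 = 5 ∨ q % 8 = 7) → Even (m.factorization q)) :
    (m : ZMod 8) = 3 ^ ∑ p ∈ m.primeFactors.filter (fun p => p % 8 = 3), m.factorization p := by
  nth_rewrite 1 [← Nat.prod_factorization_pow_eq_self hm.pos.ne']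
  rw [Finsupp.prod, Nat.support_factorization, Nat.cast_prod,
    ← Finset.prod_filter_mul_prod_filter_not _ (fun p => p % 8 = 3), ← Finset.prod_pow_eq_pow_sum]
  have hthree : ∀ p ∈ m.primeFactors.filter (fun p => p % 8 = 3),
      ((p ^ m.factorization p : ℕ) : ZMod 8) = 3 ^ m.factorization p := by
    intro p hp
    rw [Nat.cast_pow, ← ZMod.natCast_mod, (Finset.mem_filter.mp hp).2, Nat.cast_ofNat]
  have hone : ∀ p ∈ m.primeFactors.filter (fun p => ¬p % 8 = 3),
      ((p ^ m.factorization p : ℕ) : ZMod 8) = 1 := by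
    intro p hp
    obtain ⟨hpm, hp3⟩ := Finset.mem_filter.mp hp
    have hp : p.Prime := Nat.prime_of_mem_primeFactors hpm
    have hpodd : Odd p := hm.of_dvd_nat (Nat.dvd_of_mem_primeFactors hpm)
    rw [Nat.cast_pow]
    by_cases hp1 : p % 8 = 1
    · rw [← ZMod.natCast_mod, hp1, Nat.cast_one, one_pow]
    · obtain ⟨k, hk⟩ := H p hp (by rcases hpodd with ⟨j, rfl⟩; omega)
      rw [hk, ← two_mul, pow_mul, natCast_zmod_eight_sq_of_odd hpodd, one_pow]
  rw [Finset.prod_congr rfl hthree, Finset.prod_eq_one hone, mul_one]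

theorem three_pow_zmod_eight_eq_three_iff (n : ℕ) : (3 : ZMod 8) ^ n = 3 ↔ Odd n := by
  have hsq : (3 : ZMod 8) ^ 2 = 1 := by decide
  rcases n.even_or_odd' with ⟨k, rfl | rfl⟩
  · rw [pow_mul, hsq, one_pow]
    exact iff_of_false (by decide) (Nat.not_odd_iff_even.mpr (even_two_mul k))
  · rw [pow_succ, pow_mul, hsq, one_pow, one_mul]
    exact iff_of_true rfl (odd_two_mul_add_one k)

theorem odd_and_odd_sum_iff_mod_eight_eq_three {m : ℕ}
    (H : ∀ q : ℕ, q.Prime → (q % 8 = 5 ∨ q % 8 = 7) → Even (m.factorization q)) :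
    (Odd m ∧ Odd (∑ p ∈ m.primeFactors.filter (fun p => p % 8 = 3), m.factorization p)) ↔
      m % 8 = 3 := by
  have hcast : (m : ZMod 8) = 3 ↔ m % 8 = 3 := by
    simpa using ZMod.natCast_eq_natCast_iff' m 3 8
  constructor
  · rintro ⟨hm, hS⟩
    rw [← hcast, natCast_zmod_eight_eq_three_pow hm H, three_pow_zmod_eight_eq_three_iff]
    exact hS
  · intro h
    have hm : Odd m := Nat.odd_iff.mpr (by omega)
    refine ⟨hm, ?_⟩
    rw [← three_pow_zmod_eight_eq_three_iff, ← natCast_zmod_eight_eq_three_pow hm H, hcast]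
    exact h

theorem repr_by_3x2_2xy_3y2 (m : ℕ) (hm : 0 < m) :
    (∃ x y : ℤ, (m : ℤ) = 3 * x ^ 2 + 2 * x * y + 3 * y ^ 2) ↔
      (∀ q : ℕ, q.Prime → (q % 8 = 5 ∨ q % 8 = 7) → Even (m.factorization q)) ∧
      ((Odd m ∧
          Odd (∑ p ∈ m.primeFactors.filter (fun p => p % 8 = 3), m.factorization p)) ∨
        2 ≤ m.factorization 2) := by
  have h4 : 4 ∣ m ↔ 2 ≤ m.factorization 2 := by
    rw [← Nat.prime_two.pow_dvd_iff_le_factorization hm.ne']; norm_num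
  rw [exists_eq_three_mul_sq_add_iff]
  constructor
  · rintro ⟨z, hz, heven⟩
    have H := (exists_norm_eq_iff hm.ne').mp ⟨z, hz⟩
    rw [even_re_add_im_iff, hz] at heven
    rw [odd_and_odd_sum_iff_mod_eight_eq_three H, ← h4]
    exact ⟨H, by omega⟩
  · rintro ⟨H, h⟩
    obtain ⟨z, hz⟩ := (exists_norm_eq_iff hm.ne').mpr H
    rw [odd_and_odd_sum_iff_mod_eight_eq_three H, ← h4] at h
    refine ⟨z, hz, ?_⟩
    rw [even_re_add_im_iff, hz]
    omega
end

section
/- Let K be an imaginary quadratic field with ring of integers O_K, let 𝔞 be a nonzero ideal of O_K, and let m be a positive integer written as m = p_1⋯p_r · q_1^{e_1}⋯q_s^{e_s}, where the p_i are (not necessarily distinct) primes that are not inert in K (i.e., p_iO_K is not a prime ideal), the q_j are distinct primes that are inert in K (i.e., q_jO_K is a prime ideal), r, s ≥ 0, and all e_j > 0. Then N(𝔞) = m if and only if all e_j are even and there exist prime ideals 𝔭_1, …, 𝔭_r of O_K with N(𝔭_i) = p_i such that 𝔞 = 𝔭_1⋯𝔭_r · (q_1O_K)^{e_1/2}⋯(q_sO_K)^{e_s/2}.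 -/
/-!
In a quadratic ring of integers a prime `𝔭` lying over `p` divides `(p)`, whose norm is `p²`,
so `N(𝔭) = p` unless `𝔭 = (p)`, i.e. unless `p` is inert. Hence an inert `q` dividing `N(𝔞)`
forces `(q) ∣ 𝔞`, which removes `q²` from the norm: the exact power of `q` in `N(𝔞)` is even
and all of it comes from a power of `(q)`. What remains has norm `p₁ ⋯ pᵣ` with every `pᵢ`
non-inert, and it splits off one prime of norm `pᵢ` at a time.
-/

open NumberField

namespace Ideal

variable {S : Type*} [CommRing S] [IsDedekindDomain S] [Module.Free ℤ S] [Module.Finite ℤ S]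

theorem exists_isMaximal_natCast_mem_dvd_of_dvd_absNorm {p : ℕ} (hp : p.Prime) {I : Ideal S}
    (h : p ∣ absNorm I) : ∃ P : Ideal S, P.IsMaximal ∧ (p : S) ∈ P ∧ P ∣ I := by
  obtain ⟨P, hP, hunder, hPI⟩ := exists_isMaximal_dvd_of_dvd_absNorm' hp I h
  have hpP : (p : ℤ) ∈ P.under ℤ := hunder ▸ mem_span_singleton_self _
  exact ⟨P, hP, by simpa using hpP, hPI⟩

theorem span_natCast_dvd_of_dvd_absNorm {q : ℕ} (hq : q.Prime) (hqS : (span {(q : S)}).IsPrime)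
    {I : Ideal S} (h : q ∣ absNorm I) : span {(q : S)} ∣ I := by
  obtain ⟨P, hP, hqP, hPI⟩ := exists_isMaximal_natCast_mem_dvd_of_dvd_absNorm hq h
  have hne : span {(q : S)} ≠ ⊥ := by
    rw [Ne, ← absNorm_eq_zero_iff, absNorm_span_natCast]
    exact pow_ne_zero _ hq.ne_zero
  rwa [(hqS.isMaximal hne).eq_of_le hP.ne_top ((span_singleton_le_iff_mem _).mpr hqP)]

variable (hS : Module.finrank ℤ S = 2)
include hS

theorem exists_isPrime_absNorm_eq_dvd_of_dvd_absNorm {p : ℕ} (hp : p.Prime)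
    (hpS : ¬(span {(p : S)}).IsPrime) {I : Ideal S} (h : p ∣ absNorm I) :
    ∃ P : Ideal S, P.IsPrime ∧ absNorm P = p ∧ P ∣ I := by
  obtain ⟨P, hP, hpP, hPI⟩ := exists_isMaximal_natCast_mem_dvd_of_dvd_absNorm hp h
  obtain ⟨C, hC⟩ : P ∣ span {(p : S)} := dvd_iff_le.mpr ((span_singleton_le_iff_mem _).mpr hpP)
  have hnorm : absNorm P * absNorm C = p ^ 2 := by
    rw [← map_mul, ← hC, absNorm_span_natCast, hS]
  obtain ⟨k, hk, hPk⟩ := (Nat.dvd_prime_pow hp).mp (Dvd.intro _ hnorm)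
  refine ⟨P, hP.isPrime, ?_, hPI⟩
  interval_cases k
  · exact absurd (absNorm_eq_one_iff.mp (by simpa using hPk)) hP.ne_top
  · simpa using hPk
  · have hC1 : absNorm C = 1 := by
      rw [hPk] at hnorm
      exact (Nat.mul_eq_left (pow_ne_zero 2 hp.ne_zero)).mp hnorm
    rw [absNorm_eq_one_iff.mp hC1, mul_top] at hC
    exact absurd (hC ▸ hP.isPrime) hpS

theorem exists_prod_eq_of_absNorm_eq_prod {r : ℕ} {p : Fin r → ℕ} (hp : ∀ i, (p i).Prime)
    (hpS : ∀ i, ¬(span {(p i : S)}).IsPrime) {I : Ideal S} (hI : absNorm I = ∏ i, p i) :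
    ∃ 𝔭 : Fin r → Ideal S,
      (∀ i, (𝔭 i).IsPrime) ∧ (∀ i, absNorm (𝔭 i) = p i) ∧ I = ∏ i, 𝔭 i := by
  induction r generalizing I with
  | zero =>
    refine ⟨finZeroElim, finZeroElim, finZeroElim, ?_⟩
    simpa [one_eq_top] using hI
  | succ r ih =>
    rw [Fin.prod_univ_succ] at hI
    obtain ⟨P, hP, hPp, C, rfl⟩ :=
      exists_isPrime_absNorm_eq_dvd_of_dvd_absNorm hS (hp 0) (hpS 0) (Dvd.intro _ hI.symm)
    rw [map_mul, hPp] at hI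
    obtain ⟨𝔭, h𝔭, h𝔭p, rfl⟩ := ih (fun i ↦ hp i.succ) (fun i ↦ hpS i.succ)
      (Nat.eq_of_mul_eq_mul_left (hp 0).pos hI)
    refine ⟨Fin.cons P 𝔭, Fin.cases hP h𝔭, Fin.cases hPp h𝔭p, ?_⟩
    simp [Fin.prod_univ_succ]

theorem exists_span_pow_mul_of_absNorm_eq {q : ℕ} (hq : q.Prime)
    (hqS : (span {(q : S)}).IsPrime) {n : ℕ} (hn : ¬q ∣ n) :
    ∀ {e : ℕ} {I : Ideal S}, absNorm I = q ^ e * n →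
      Even e ∧ ∃ C : Ideal S, absNorm C = n ∧ I = span {(q : S)} ^ (e / 2) * C
  | 0, I, hI => ⟨⟨0, rfl⟩, I, by simpa using hI, by simp⟩
  | 1, I, hI => by
    obtain ⟨C, rfl⟩ := span_natCast_dvd_of_dvd_absNorm hq hqS
      (by rw [hI, pow_one]; exact dvd_mul_right q n)
    rw [map_mul, absNorm_span_natCast, hS, pow_one] at hI
    have hq2 : q * q ∣ q * n := hI ▸ Dvd.intro (absNorm C) (by ring)
    exact absurd ((Nat.mul_dvd_mul_iff_left hq.pos).mp hq2) hn
  | e + 2, I, hI => by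
    obtain ⟨C, rfl⟩ := span_natCast_dvd_of_dvd_absNorm hq hqS
      (hI ▸ dvd_mul_of_dvd_left (dvd_pow_self q (by omega)) n)
    rw [map_mul, absNorm_span_natCast, hS, pow_add, mul_comm (q ^ e), mul_assoc] at hI
    obtain ⟨he, D, hD, rfl⟩ :=
      exists_span_pow_mul_of_absNorm_eq hq hqS hn (Nat.eq_of_mul_eq_mul_left (pow_pos hq.pos 2) hI)
    refine ⟨he.add even_two, D, hD, ?_⟩
    rw [← mul_assoc, ← pow_succ', Nat.add_div_right e two_pos]

theorem exists_mul_prod_span_pow_of_absNorm_eq {s : ℕ} {q e : Fin s → ℕ}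
    (hq : ∀ j, (q j).Prime) (hqinj : Function.Injective q)
    (hqS : ∀ j, (span {(q j : S)}).IsPrime) {n : ℕ} (hn : ∀ j, ¬q j ∣ n) {I : Ideal S}
    (hI : absNorm I = n * ∏ j, q j ^ e j) :
    (∀ j, Even (e j)) ∧
      ∃ C : Ideal S, absNorm C = n ∧ I = C * ∏ j, span {(q j : S)} ^ (e j / 2) := by
  induction s generalizing I with
  | zero => exact ⟨finZeroElim, I, by simpa using hI, by simp⟩
  | succ s ih =>
    have hq0 : ¬q 0 ∣ n * ∏ j : Fin s, q j.succ ^ e j.succ := by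
      rw [(hq 0).prime.dvd_mul, (hq 0).prime.dvd_finsetProd_iff]
      rintro (h | ⟨j, -, hj⟩)
      · exact hn 0 h
      · exact Fin.succ_ne_zero j
          (hqinj ((Nat.prime_dvd_prime_iff_eq (hq 0) (hq _)).mp ((hq 0).dvd_of_dvd_pow hj))).symm
    rw [Fin.prod_univ_succ, mul_left_comm] at hI
    obtain ⟨he0, B, hB, rfl⟩ := exists_span_pow_mul_of_absNorm_eq hS (hq 0) (hqS 0) hq0 hI
    obtain ⟨he, C, hC, rfl⟩ := ih (fun j ↦ hq j.succ) (hqinj.comp (Fin.succ_injective s))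
      (fun j ↦ hqS j.succ) (fun j ↦ hn j.succ) hB
    refine ⟨Fin.cases he0 he, C, hC, ?_⟩
    rw [Fin.prod_univ_succ]
    ring

end Ideal

theorem norm_decomposition_OK_general (K : Type*) [Field K] [NumberField K]
    (hdeg : Module.finrank ℚ K = 2)
    (𝔞 : Ideal (𝓞 K))
    (m : ℕ)
    (r s : ℕ) (p : Fin r → ℕ) (q : Fin s → ℕ) (e : Fin s → ℕ)
    (hp : ∀ i, (p i).Prime)
    (hpnotinert : ∀ i, ¬(Ideal.span {((p i : ℕ) : 𝓞 K)} : Ideal (𝓞 K)).IsPrime)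
    (hq : ∀ j, (q j).Prime) (hqinj : Function.Injective q)
    (hqinert : ∀ j, (Ideal.span {((q j : ℕ) : 𝓞 K)} : Ideal (𝓞 K)).IsPrime)
    (hmfact : m = (∏ i, p i) * ∏ j, q j ^ e j) :
    Ideal.absNorm 𝔞 = m ↔
      (∀ j, Even (e j)) ∧
      ∃ 𝔭 : Fin r → Ideal (𝓞 K),
        (∀ i, (𝔭 i).IsPrime) ∧ (∀ i, Ideal.absNorm (𝔭 i) = p i) ∧
        𝔞 = (∏ i, 𝔭 i) *
          ∏ j, (Ideal.span {((q j : ℕ) : 𝓞 K)} : Ideal (𝓞 K)) ^ (e j / 2) := by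
  have hS : Module.finrank ℤ (𝓞 K) = 2 := (RingOfIntegers.rank K).trans hdeg
  constructor
  · intro hnorm
    have hqp : ∀ j, ¬q j ∣ ∏ i, p i := fun j hdvd ↦ by
      obtain ⟨i, -, hi⟩ := (hq j).prime.dvd_finsetProd_iff _ |>.mp hdvd
      exact hpnotinert i ((Nat.prime_dvd_prime_iff_eq (hq j) (hp i)).mp hi ▸ hqinert j)
    obtain ⟨heven, C, hC, rfl⟩ :=
      Ideal.exists_mul_prod_span_pow_of_absNorm_eq hS hq hqinj hqinert hqp (hnorm.trans hmfact)
    obtain ⟨𝔭, h𝔭, h𝔭p, rfl⟩ := Ideal.exists_prod_eq_of_absNorm_eq_prod hS hp hpnotinert hC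
    exact ⟨heven, 𝔭, h𝔭, h𝔭p, rfl⟩
  · rintro ⟨heven, 𝔭, -, h𝔭p, rfl⟩
    rw [hmfact, map_mul, map_prod, map_prod]
    congr 1
    · exact Finset.prod_congr rfl fun i _ ↦ h𝔭p i
    · refine Finset.prod_congr rfl fun j _ ↦ ?_
      rw [map_pow, Ideal.absNorm_span_natCast, hS, ← pow_mul,
        Nat.two_mul_div_two_of_even (heven j)]

theorem norm_decomposition_OK (K : Type*) [Field K] [NumberField K]
    (hdeg : Module.finrank ℚ K = 2) (himag : IsEmpty (K →+* ℝ))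
    (𝔞 : Ideal (𝓞 K)) (h𝔞 : 𝔞 ≠ ⊥)
    (m : ℕ) (hm : 0 < m)
    (r s : ℕ) (p : Fin r → ℕ) (q : Fin s → ℕ) (e : Fin s → ℕ)
    (hp : ∀ i, (p i).Prime)
    (hpnotinert : ∀ i, ¬(Ideal.span {((p i : ℕ) : 𝓞 K)} : Ideal (𝓞 K)).IsPrime)
    (hq : ∀ j, (q j).Prime) (hqinj : Function.Injective q)
    (hqinert : ∀ j, (Ideal.span {((q j : ℕ) : 𝓞 K)} : Ideal (𝓞 K)).IsPrime)
    (he : ∀ j, 0 < e j)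
    (hmfact : m = (∏ i, p i) * ∏ j, q j ^ e j) :
    Ideal.absNorm 𝔞 = m ↔
      (∀ j, Even (e j)) ∧
      ∃ 𝔭 : Fin r → Ideal (𝓞 K),
        (∀ i, (𝔭 i).IsPrime) ∧ (∀ i, Ideal.absNorm (𝔭 i) = p i) ∧
        𝔞 = (∏ i, 𝔭 i) *
          ∏ j, (Ideal.span {((q j : ℕ) : 𝓞 K)} : Ideal (𝓞 K)) ^ (e j / 2) :=
  norm_decomposition_OK_general K hdeg 𝔞 m r s p q e hp hpnotinert hq hqinj hqinert hmfact
end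

section
/- Let O be the order of conductor f in an imaginary quadratic field K, let 𝔞 be a proper O-ideal, and let m be a positive integer relatively prime to f, written as m = p_1⋯p_r · q_1^{e_1}⋯q_s^{e_s}, where the p_i are (not necessarily distinct) primes coprime to f that are not inert in K (i.e., p_iO_K is not a prime ideal), the q_j are distinct primes coprime to f that are inert in K (i.e., q_jO_K is a prime ideal), r, s ≥ 0, and all e_j > 0. Then N(𝔞) = m if and only if all e_j are even and there exist prime ideals 𝔭_1, …, 𝔭_r of O with N(𝔭_i) = p_i such that 𝔞 = 𝔭_1⋯𝔭_r · (q_1O)^{e_1/2}⋯(q_sO)^{e_s/2}. -/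
open NumberField

/-- An order in the field `K`: a subring that is free of rank `2` as a `ℤ`-module. -/
def IsQuadraticOrder (K : Type*) [Field K] (O : Subring K) : Prop :=
  Module.Free ℤ O ∧ Module.finrank ℤ O = 2

/-- The conductor of an order `O` in `K`: the index `[𝒪_K : O]` of `O` in the
ring of integers (the integral closure of `ℤ` in `K`). -/
noncomputable def orderConductor (K : Type*) [Field K] (O : Subring K) : ℕ :=
  AddSubgroup.relIndex O.toAddSubgroup (integralClosure ℤ K).toSubring.toAddSubgroup

/-- A proper ideal of an order `O` in `K`: a nonzero ideal whose multiplier ring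
`{β ∈ K : β𝔞 ⊆ 𝔞}` is exactly `O`. -/
def IsProperIdeal {K : Type*} [Field K] (O : Subring K) (𝔞 : Ideal O) : Prop :=
  𝔞 ≠ ⊥ ∧ ∀ β : K, (∀ a ∈ 𝔞, ∃ c ∈ 𝔞, β * (a : K) = (c : K)) ↔ β ∈ O

/-!
Since `m` is prime to the conductor `f`, so is `𝔞`. Because `f 𝒪_K ⊆ O`, extension `𝔞 ↦ 𝔞 𝒪_K`
and contraction `𝔅 ↦ 𝔅 ∩ O` are mutually inverse on ideals prime to `f`, they preserve the index
and commute with products, so everything can be decided in `𝒪_K`. There, a nonzero prime `𝔓`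
over `ℓ` has norm `ℓ` or equals `ℓ 𝒪_K` (its norm divides `N(ℓ 𝒪_K) = ℓ²`). Hence the prime
factors of an ideal of norm `m` are the `q_j 𝒪_K` and primes of norm some `p_i`; unique
factorization of `m` then forces `e_j = 2 · (multiplicity of q_j 𝒪_K)` and matches the remaining
factors with the `p_i`.
-/

namespace Ideal

variable {R S : Type*} [CommRing R] [CommRing S]

theorem natCast_card_quotient_mem (I : Ideal R) : (Nat.card (R ⧸ I) : R) ∈ I := by
  rw [← Quotient.eq_zero_iff_mem, map_natCast]
  exact Quotient.index_eq_zero I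

theorem exists_add_mul_eq_one_of_sup_span_eq_top {I : Ideal R} {f : R}
    (hI : I ⊔ span {f} = ⊤) : ∃ a ∈ I, ∃ t, a + t * f = 1 := by
  obtain ⟨t, a, ha, h⟩ := mem_span_singleton_sup.mp (sup_comm I _ ▸ hI ▸ Submodule.mem_top)
  exact ⟨a, ha, t, by rw [add_comm, h]⟩

theorem sup_span_natCast_eq_top {I : Ideal R} {n k : ℕ} (hn : (n : R) ∈ I)
    (hnk : n.Coprime k) : I ⊔ span {(k : R)} = ⊤ := by
  obtain ⟨u, v, huv⟩ := Nat.Coprime.isCoprime hnk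
  rw [eq_top_iff_one, ← Int.cast_one (R := R), ← huv]
  push_cast
  exact add_mem (mem_sup_left (I.mul_mem_left _ hn))
    (mem_sup_right (mul_mem_left _ _ (mem_span_singleton_self _)))

section Conductor

variable {φ : R →+* S} {f : R} (hf : ∀ y : S, ∃ z : R, φ z = φ f * y)
include hf

theorem exists_mem_eq_mul_of_mem_map {I : Ideal R} {y : S} (hy : y ∈ I.map φ) :
    ∃ z ∈ I, φ z = φ f * y := by
  -- quantifying over `s` makes the `smul` step of the induction go through
  suffices ∀ s : S, ∃ z ∈ I, φ z = φ f * s * y by simpa using this 1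
  induction hy using Submodule.span_induction with
  | mem _ h =>
    obtain ⟨a, ha, rfl⟩ := h
    intro s
    obtain ⟨z, hz⟩ := hf s
    exact ⟨z * a, I.mul_mem_left z ha, by rw [map_mul, hz]⟩
  | zero => exact fun _ => ⟨0, I.zero_mem, by simp⟩
  | add _ _ _ _ h₁ h₂ =>
    intro s
    obtain ⟨z₁, hz₁, e₁⟩ := h₁ s
    obtain ⟨z₂, hz₂, e₂⟩ := h₂ s
    exact ⟨z₁ + z₂, I.add_mem hz₁ hz₂, by rw [map_add, e₁, e₂]; ring⟩
  | smul c _ _ h =>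
    intro s
    obtain ⟨z, hz, e⟩ := h (s * c)
    exact ⟨z, hz, by rw [e, smul_eq_mul]; ring⟩

theorem comap_map_of_sup_span_eq_top (hinj : Function.Injective φ) {I : Ideal R}
    (hI : I ⊔ span {f} = ⊤) : (I.map φ).comap φ = I := by
  refine le_antisymm (fun x hx => ?_) le_comap_map
  obtain ⟨a, ha, t, hat⟩ := exists_add_mul_eq_one_of_sup_span_eq_top hI
  obtain ⟨z, hz, e⟩ := exists_mem_eq_mul_of_mem_map hf (mem_comap.mp hx)
  have hfx : f * x ∈ I := by rwa [← hinj (e.trans (map_mul φ f x).symm)]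
  have : x = x * a + t * (f * x) := by linear_combination x * hat.symm
  rw [this]
  exact I.add_mem (I.mul_mem_left _ ha) (I.mul_mem_left _ hfx)

theorem map_comap_of_comap_sup_span_eq_top {B : Ideal S} (hB : B.comap φ ⊔ span {f} = ⊤) :
    (B.comap φ).map φ = B := by
  refine le_antisymm map_comap_le (fun y hy => ?_)
  obtain ⟨a, ha, t, hat⟩ := exists_add_mul_eq_one_of_sup_span_eq_top hB
  obtain ⟨z, hz⟩ := hf y
  have hzB : z ∈ B.comap φ := by rw [mem_comap, hz]; exact B.mul_mem_left _ hy
  have hat' : φ a + φ t * φ f = 1 := by rw [← map_mul, ← map_add, hat, map_one]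
  have : y = φ a * y + φ t * φ z := by rw [hz]; linear_combination -y * hat'
  rw [this]
  exact add_mem (mul_mem_right _ _ (mem_map_of_mem φ ha)) (mul_mem_left _ _ (mem_map_of_mem φ hzB))

theorem surjective_quotientMk_comp_of_comap_sup_span_eq_top {B : Ideal S}
    (hB : B.comap φ ⊔ span {f} = ⊤) : Function.Surjective ((Quotient.mk B).comp φ) := by
  intro y
  obtain ⟨y, rfl⟩ := Quotient.mk_surjective y
  obtain ⟨a, ha, t, hat⟩ := exists_add_mul_eq_one_of_sup_span_eq_top hB
  obtain ⟨z, hz⟩ := hf (φ t * y)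
  refine ⟨z, Quotient.eq.mpr ?_⟩
  have hat' : φ a + φ t * φ f = 1 := by rw [← map_mul, ← map_add, hat, map_one]
  have : φ z - y = -(φ a * y) := by rw [hz]; linear_combination y * hat'
  rw [this]
  exact neg_mem (B.mul_mem_right _ ha)

theorem card_quotient_comap_of_comap_sup_span_eq_top {B : Ideal S}
    (hB : B.comap φ ⊔ span {f} = ⊤) : Nat.card (R ⧸ B.comap φ) = Nat.card (S ⧸ B) := by
  have hker : RingHom.ker ((Quotient.mk B).comp φ) = B.comap φ := by
    rw [← RingHom.comap_ker, mk_ker]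
  exact Nat.card_congr ((quotEquivOfEq hker.symm).trans
    (RingHom.quotientKerEquivOfSurjective
      (surjective_quotientMk_comp_of_comap_sup_span_eq_top hf hB))).toEquiv

theorem card_quotient_map_of_sup_span_eq_top (hinj : Function.Injective φ) {I : Ideal R}
    (hI : I ⊔ span {f} = ⊤) : Nat.card (S ⧸ I.map φ) = Nat.card (R ⧸ I) := by
  have hI' := comap_map_of_sup_span_eq_top hf hinj hI
  rw [← card_quotient_comap_of_comap_sup_span_eq_top hf (B := I.map φ) (by rwa [hI']), hI']

end Conductor

section Products

variable {ι κ : Type*} [Fintype ι] [Fintype κ]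

theorem natCast_prod_mul_prod_pow_mem_prod_mul_prod_span_pow {p : ι → ℕ} {q : κ → ℕ}
    {e : κ → ℕ} {𝔭 : ι → Ideal R} (hp : ∀ i, (p i : R) ∈ 𝔭 i) :
    (((∏ i, p i) * ∏ j, q j ^ e j : ℕ) : R) ∈ (∏ i, 𝔭 i) * ∏ j, span {(q j : R)} ^ (e j / 2) := by
  push_cast
  refine mul_mem_mul (prod_mem_prod fun i _ => hp i) (prod_mem_prod fun j _ => ?_)
  rw [span_singleton_pow, mem_span_singleton]
  exact pow_dvd_pow _ (Nat.div_le_self _ _)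

theorem map_prod_mul_prod_span_pow (φ : R →+* S) (𝔭 : ι → Ideal R) (q : κ → ℕ) (k : κ → ℕ) :
    ((∏ i, 𝔭 i) * ∏ j, span {(q j : R)} ^ k j).map φ =
      (∏ i, (𝔭 i).map φ) * ∏ j, span {(q j : S)} ^ k j := by
  simp only [← mapHom_apply, map_mul, map_prod, map_pow]
  simp only [mapHom_apply, map_span, Set.image_singleton, map_natCast]

end Products

theorem eq_of_le_of_absNorm_eq [IsDedekindDomain S] [Module.Free ℤ S] {I J : Ideal S}
    (h : I ≤ J) (hIJ : absNorm I = absNorm J) (hI : absNorm I ≠ 0) : I = J := by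
  obtain ⟨C, rfl⟩ := dvd_iff_le.mpr h
  have hJ : absNorm J ≠ 0 := hIJ ▸ hI
  rw [_root_.map_mul, mul_eq_left₀ hJ] at hIJ
  rw [absNorm_eq_one_iff.mp hIJ, mul_top]

end Ideal

section Multisets

open Finset

theorem Multiset.prod_filter_mem_range {M ι : Type*} [CommMonoid M] [DecidableEq M] [Fintype ι]
    {Q : ι → M} (hQ : Function.Injective Q) (F : Multiset M) [DecidablePred (· ∈ Set.range Q)] :
    (F.filter (· ∈ Set.range Q)).prod = ∏ j, Q j ^ F.count (Q j) := by
  set G := F.filter (· ∈ Set.range Q)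
  calc G.prod = ∏ m ∈ univ.image Q, m ^ G.count m := by
        rw [Finset.prod_multiset_count]
        refine Finset.prod_subset (fun x hx => ?_) (fun x _ hx => ?_)
        · obtain ⟨j, rfl⟩ := (Multiset.mem_filter.mp (Multiset.mem_toFinset.mp hx)).2
          exact mem_image_of_mem Q (mem_univ j)
        · rw [Multiset.count_eq_zero.mpr (mt Multiset.mem_toFinset.mpr hx), pow_zero]
    _ = ∏ j, Q j ^ G.count (Q j) := Finset.prod_image fun j _ k _ h => hQ h
    _ = ∏ j, Q j ^ F.count (Q j) := by
        simp only [G, Multiset.count_filter_of_pos (Set.mem_range_self _)]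

theorem Multiset.count_add_sum_replicate {α κ : Type*} [DecidableEq α] [Fintype κ] {q : κ → α}
    (hq : Function.Injective q) {Y : Multiset α} (E : κ → ℕ) {j : κ} (hj : q j ∉ Y) :
    (Y + ∑ k, Multiset.replicate (E k) (q k)).count (q j) = E j := by
  classical
  simp only [Multiset.count_add, Multiset.count_eq_zero.mpr hj, zero_add, Multiset.count_sum',
    Multiset.count_replicate, hq.eq_iff, Finset.sum_ite_eq', mem_univ, if_true]

theorem Multiset.exists_fin_prod_eq_of_map_eq {β γ : Type*} [CommMonoid β] (N : β → γ) :
    ∀ {r : ℕ} (p : Fin r → γ) (F : Multiset β), F.map N = univ.val.map p →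
      ∃ Q : Fin r → β, (∀ i, Q i ∈ F) ∧ (∀ i, N (Q i) = p i) ∧ F.prod = ∏ i, Q i
  | 0, p, F, h => by
    obtain rfl : F = 0 := by simpa using h
    exact ⟨Fin.elim0, Fin.rec0, Fin.rec0, by simp⟩
  | r + 1, p, F, h => by
    rw [Fin.univ_val_map, List.ofFn_succ, ← Multiset.cons_coe, ← Fin.univ_val_map] at h
    obtain ⟨P, hPF, hP⟩ := Multiset.mem_map.mp (h ▸ Multiset.mem_cons_self _ _)
    obtain ⟨F, rfl⟩ := Multiset.exists_cons_of_mem hPF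
    rw [Multiset.map_cons, hP, Multiset.cons_inj_right] at h
    obtain ⟨Q, hQF, hQ, hprod⟩ := exists_fin_prod_eq_of_map_eq N (fun i => p i.succ) F h
    refine ⟨Fin.cons P Q, Fin.cases (Multiset.mem_cons_self _ _)
      fun i => Multiset.mem_cons_of_mem (hQF i), Fin.cases hP hQ, ?_⟩
    rw [Multiset.prod_cons, hprod, Fin.prod_univ_succ]
    simp

theorem Nat.eq_of_multiset_prod_eq {A B : Multiset ℕ} (hA : ∀ x ∈ A, x.Prime)
    (hB : ∀ x ∈ B, x.Prime) (h : A.prod = B.prod) : A = B := by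
  rw [← UniqueFactorizationMonoid.normalizedFactors_prod_of_prime fun x hx => (hA x hx).prime, h,
    UniqueFactorizationMonoid.normalizedFactors_prod_of_prime fun x hx => (hB x hx).prime]

variable {ι κ : Type*} [Fintype ι] [Fintype κ] {p : ι → ℕ} {q : κ → ℕ}

theorem Nat.Prime.exists_eq_of_dvd_prod_mul_prod_pow {ℓ : ℕ} (hℓ : ℓ.Prime)
    (hp : ∀ i, (p i).Prime) (hq : ∀ j, (q j).Prime) {e : κ → ℕ}
    (h : ℓ ∣ (∏ i, p i) * ∏ j, q j ^ e j) : (∃ i, ℓ = p i) ∨ ∃ j, ℓ = q j := by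
  refine (hℓ.dvd_mul.mp h).imp (fun h => ?_) (fun h => ?_)
  · obtain ⟨i, -, hi⟩ := (hℓ.prime.dvd_finsetProd_iff _).mp h
    exact ⟨i, (Nat.prime_dvd_prime_iff_eq hℓ (hp i)).mp hi⟩
  · obtain ⟨j, -, hj⟩ := (hℓ.prime.dvd_finsetProd_iff _).mp h
    exact ⟨j, (Nat.prime_dvd_prime_iff_eq hℓ (hq j)).mp (hℓ.dvd_of_dvd_pow hj)⟩

theorem Nat.eq_and_eq_two_mul_of_prod_mul_prod_pow_eq (hp : ∀ i, (p i).Prime)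
    (hq : ∀ j, (q j).Prime) (hqinj : Function.Injective q) (hpq : ∀ i j, p i ≠ q j)
    {e v : κ → ℕ} {X : Multiset ℕ} (hX : ∀ x ∈ X, ∃ i, x = p i)
    (h : (∏ i, p i) * ∏ j, q j ^ e j = X.prod * ∏ j, q j ^ (2 * v j)) :
    X = univ.val.map p ∧ ∀ j, e j = 2 * v j := by
  classical
  set R : (κ → ℕ) → Multiset ℕ := fun E => ∑ j, Multiset.replicate (E j) (q j)
  have hprime : ∀ Y : Multiset ℕ, (∀ y ∈ Y, ∃ i, y = p i) → ∀ E, ∀ x ∈ Y + R E, x.Prime := by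
    intro Y hY E x hx
    rcases Multiset.mem_add.mp hx with hx | hx
    · obtain ⟨i, rfl⟩ := hY x hx
      exact hp i
    · obtain ⟨j, -, hj⟩ := Multiset.mem_sum.mp hx
      exact Multiset.eq_of_mem_replicate hj ▸ hq j
  have hcount : ∀ Y : Multiset ℕ, (∀ y ∈ Y, ∃ i, y = p i) → ∀ E j, (Y + R E).count (q j) = E j :=
    fun Y hY E j => Multiset.count_add_sum_replicate hqinj E fun hj => by
      obtain ⟨i, hi⟩ := hY _ hj
      exact hpq i j hi.symm
  have hP : ∀ y ∈ univ.val.map p, ∃ i, y = p i := fun y hy => by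
    obtain ⟨i, -, rfl⟩ := Multiset.mem_map.mp hy
    exact ⟨i, rfl⟩
  have key : univ.val.map p + R e = X + R (fun j => 2 * v j) :=
    Nat.eq_of_multiset_prod_eq (hprime _ hP e) (hprime X hX _) <| by
      simpa only [R, Multiset.prod_add, Multiset.prod_sum, Multiset.prod_replicate,
        ← Finset.prod_eq_multiset_prod] using h
  have he : ∀ j, e j = 2 * v j := fun j => by
    simpa only [hcount _ hP, hcount X hX] using congrArg (Multiset.count (q j)) key
  refine ⟨(add_right_cancel (key.trans ?_)).symm, he⟩
  simp only [R, he]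

end Multisets

namespace NumberField

open _root_.Ideal

variable {K : Type*} [Field K] [NumberField K]

theorem absNorm_span_natCast_of_finrank_eq_two (hdeg : Module.finrank ℚ K = 2) (n : ℕ) :
    absNorm (span {(n : 𝓞 K)}) = n ^ 2 := by
  rw [absNorm_span_natCast, RingOfIntegers.rank, hdeg]

theorem span_natCast_injective : Function.Injective fun n : ℕ => span {(n : 𝓞 K)} :=
  fun m n h => Nat.pow_left_injective Module.finrank_pos.ne' <| by
    simpa only [absNorm_span_natCast] using congrArg absNorm h

theorem exists_prime_absNorm_eq_or_eq_span_of_finrank_eq_two (hdeg : Module.finrank ℚ K = 2)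
    (P : Ideal (𝓞 K)) [P.IsMaximal] :
    ∃ ℓ : ℕ, ℓ.Prime ∧ (ℓ : 𝓞 K) ∈ P ∧ (absNorm P = ℓ ∨ P = span {(ℓ : 𝓞 K)}) := by
  obtain ⟨ℓ, n, hn, hℓP, hℓ, hPn⟩ := exists_prime_and_absNorm_eq_pow P
  have hle : span {(ℓ : 𝓞 K)} ≤ P := (span_singleton_le_iff_mem _).mpr hℓP
  have hdvd : ℓ ^ n ∣ ℓ ^ 2 := by
    rw [← hPn, ← absNorm_span_natCast_of_finrank_eq_two hdeg]
    exact absNorm_dvd_absNorm_of_le hle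
  have hn2 : n ≤ 2 := (Nat.pow_dvd_pow_iff_le_right hℓ.one_lt).mp hdvd
  refine ⟨ℓ, hℓ, hℓP, ?_⟩
  interval_cases n
  · exact .inl (by rw [hPn, pow_one])
  · refine .inr (eq_of_le_of_absNorm_eq hle ?_ ?_).symm
    · rw [hPn, absNorm_span_natCast_of_finrank_eq_two hdeg]
    · rw [absNorm_span_natCast_of_finrank_eq_two hdeg]
      exact pow_ne_zero 2 hℓ.ne_zero

section Factorization

variable (hdeg : Module.finrank ℚ K = 2) {r s : ℕ} {p : Fin r → ℕ} {q : Fin s → ℕ}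
  (hp : ∀ i, (p i).Prime) (hpnotinert : ∀ i, ¬(span {(p i : 𝓞 K)}).IsPrime)
  (hq : ∀ j, (q j).Prime) (hqinert : ∀ j, (span {(q j : 𝓞 K)}).IsPrime)
include hdeg hp hpnotinert hq hqinert

theorem absNorm_eq_or_eq_span_of_mem_normalizedFactors {e : Fin s → ℕ} {𝔟 P : Ideal (𝓞 K)}
    (hP𝔟 : P ∈ UniqueFactorizationMonoid.normalizedFactors 𝔟)
    (hN : absNorm 𝔟 = (∏ i, p i) * ∏ j, q j ^ e j) :
    (∃ i, absNorm P = p i) ∨ ∃ j, P = span {(q j : 𝓞 K)} := by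
  have hPprime := UniqueFactorizationMonoid.prime_of_normalized_factor P hP𝔟
  have := (isPrime_of_prime hPprime).isMaximal hPprime.ne_zero
  have hle : 𝔟 ≤ P := le_of_dvd (UniqueFactorizationMonoid.dvd_of_mem_normalizedFactors hP𝔟)
  obtain ⟨ℓ, hℓ, hℓP, hP⟩ := exists_prime_absNorm_eq_or_eq_span_of_finrank_eq_two hdeg P
  have hℓdvd : ℓ ∣ absNorm 𝔟 := by
    refine Dvd.dvd.trans ?_ (absNorm_dvd_absNorm_of_le hle)
    rcases hP with h | h
    · rw [h]
    · rw [h, absNorm_span_natCast_of_finrank_eq_two hdeg]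
      exact dvd_pow_self ℓ two_ne_zero
  rw [hN] at hℓdvd
  rcases hP with hP | rfl <;>
    rcases hℓ.exists_eq_of_dvd_prod_mul_prod_pow hp hq hℓdvd with ⟨i, rfl⟩ | ⟨j, rfl⟩
  · exact .inl ⟨i, hP⟩
  · have := (hqinert j).isMaximal (by simpa using (hq j).ne_zero)
    exact .inr ⟨j, (this.eq_of_le IsPrime.ne_top' ((span_singleton_le_iff_mem _).mpr hℓP)).symm⟩
  · exact absurd (IsMaximal.isPrime ‹_›) (hpnotinert i)
  · exact .inr ⟨j, rfl⟩

theorem exists_eq_prod_mul_prod_span_pow_of_absNorm_eq (hqinj : Function.Injective q)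
    {e : Fin s → ℕ} (𝔟 : Ideal (𝓞 K)) (hN : absNorm 𝔟 = (∏ i, p i) * ∏ j, q j ^ e j) :
    (∀ j, Even (e j)) ∧ ∃ 𝔔 : Fin r → Ideal (𝓞 K), (∀ i, (𝔔 i).IsPrime) ∧
      (∀ i, absNorm (𝔔 i) = p i) ∧
      𝔟 = (∏ i, 𝔔 i) * ∏ j, span {(q j : 𝓞 K)} ^ (e j / 2) := by
  classical
  set Q : Fin s → Ideal (𝓞 K) := fun j => span {(q j : 𝓞 K)}
  have hQinj : Function.Injective Q := span_natCast_injective.comp hqinj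
  have h𝔟 : 𝔟 ≠ ⊥ := fun h => by
    rw [h, absNorm_bot] at hN
    exact mul_ne_zero (Finset.prod_ne_zero_iff.mpr fun i _ => (hp i).ne_zero)
      (Finset.prod_ne_zero_iff.mpr fun j _ => pow_ne_zero _ (hq j).ne_zero) hN.symm
  set F := UniqueFactorizationMonoid.normalizedFactors 𝔟
  set F' := F.filter (· ∉ Set.range Q)
  set v : Fin s → ℕ := fun j => F.count (Q j)
  have hsplit : 𝔟 = F'.prod * ∏ j, Q j ^ v j := by
    rw [← Multiset.prod_filter_mem_range hQinj, ← Multiset.prod_add, add_comm,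
      Multiset.filter_add_not, UniqueFactorizationMonoid.prod_normalizedFactors_eq h𝔟,
      normalize_eq]
  have hF'prime : ∀ P ∈ F', Prime P := fun P hP =>
    UniqueFactorizationMonoid.prime_of_normalized_factor P (Multiset.mem_of_mem_filter hP)
  have hF' : ∀ P ∈ F', ∃ i, absNorm P = p i := fun P hP =>
    (absNorm_eq_or_eq_span_of_mem_normalizedFactors hdeg hp hpnotinert hq hqinert
      (Multiset.mem_of_mem_filter hP) hN).resolve_right fun ⟨j, hj⟩ =>
        (Multiset.mem_filter.mp hP).2 ⟨j, hj.symm⟩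
  have hnorm : (∏ i, p i) * ∏ j, q j ^ e j = (F'.map absNorm).prod * ∏ j, q j ^ (2 * v j) := by
    rw [← hN, hsplit, _root_.map_mul, map_multiset_prod, map_prod]
    simp only [Q, map_pow, absNorm_span_natCast_of_finrank_eq_two hdeg, pow_mul]
  obtain ⟨hF'norm, he⟩ := Nat.eq_and_eq_two_mul_of_prod_mul_prod_pow_eq hp hq hqinj
    (fun i j h => hpnotinert i (h ▸ hqinert j))
    (fun x hx => by
      obtain ⟨P, hP, rfl⟩ := Multiset.mem_map.mp hx
      exact hF' P hP) hnorm
  obtain ⟨𝔔, h𝔔F', h𝔔, hprod⟩ := Multiset.exists_fin_prod_eq_of_map_eq absNorm p F' hF'norm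
  refine ⟨fun j => ⟨v j, by rw [he j]; ring⟩, 𝔔, fun i => isPrime_of_prime (hF'prime _ (h𝔔F' i)),
    h𝔔, ?_⟩
  rw [hsplit, hprod]
  simp only [Q, he, Nat.mul_div_cancel_left _ two_pos]

end Factorization

end NumberField

theorem orderConductor_mul_mem {K : Type*} [Field K] (O : Subring K) {y : K}
    (hy : IsIntegral ℤ y) : (orderConductor K O : K) * y ∈ O := by
  have := O.toAddSubgroup.nsmul_relIndex_mem (K := (integralClosure ℤ K).toSubring.toAddSubgroup)
    (g := y) hy
  rwa [nsmul_eq_mul] at this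

theorem IsQuadraticOrder.exists_injective_ringHom_conductor {K : Type*} [Field K]
    {O : Subring K} (hO : IsQuadraticOrder K O) :
    ∃ φ : O →+* 𝓞 K, Function.Injective φ ∧
      ∀ y : 𝓞 K, ∃ z : O, φ z = φ (orderConductor K O) * y := by
  have := hO.1
  have : Module.Finite ℤ O := Module.finite_of_finrank_pos (by rw [hO.2]; exact two_pos)
  let φ : O →+* 𝓞 K :=
    { toFun x := ⟨x, (Algebra.IsIntegral.isIntegral x).map O.subtype.toIntAlgHom⟩
      map_one' := rfl
      map_mul' _ _ := rfl
      map_zero' := rfl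
      map_add' _ _ := rfl }
  refine ⟨φ, fun x y h => Subtype.ext (congrArg ((↑) : 𝓞 K → K) h), fun y => ?_⟩
  refine ⟨⟨_, orderConductor_mul_mem O y.2⟩, ?_⟩
  ext
  rfl

section Order

open Ideal

variable {K : Type*} [Field K] [NumberField K] {R : Type*} [CommRing R] {φ : R →+* 𝓞 K}
  (hφ : Function.Injective φ) {f : ℕ} (hf : ∀ y : 𝓞 K, ∃ z : R, φ z = φ f * y)
include hφ hf

theorem card_quotient_eq_absNorm_map {I : Ideal R} (hI : I ⊔ span {(f : R)} = ⊤) :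
    Nat.card (R ⧸ I) = absNorm (I.map φ) := by
  rw [absNorm_apply, Submodule.cardQuot_apply, card_quotient_map_of_sup_span_eq_top hf hφ hI]

variable (hdeg : Module.finrank ℚ K = 2) {r s : ℕ} {p : Fin r → ℕ} {q : Fin s → ℕ}
  {e : Fin s → ℕ} (hpf : ∀ i, (p i).Coprime f)
include hdeg hpf

theorem card_quotient_prod_mul_prod_span_pow {𝔭 : Fin r → Ideal R}
    (h𝔭 : ∀ i, Nat.card (R ⧸ 𝔭 i) = p i) (heven : ∀ j, Even (e j))
    (hmf : ((∏ i, p i) * ∏ j, q j ^ e j).Coprime f) :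
    Nat.card (R ⧸ (∏ i, 𝔭 i) * ∏ j, span {(q j : R)} ^ (e j / 2)) =
      (∏ i, p i) * ∏ j, q j ^ e j := by
  have hpmem : ∀ i, (p i : R) ∈ 𝔭 i := fun i => h𝔭 i ▸ natCast_card_quotient_mem (𝔭 i)
  rw [card_quotient_eq_absNorm_map hφ hf (sup_span_natCast_eq_top
      (natCast_prod_mul_prod_pow_mem_prod_mul_prod_span_pow hpmem) hmf),
    map_prod_mul_prod_span_pow, _root_.map_mul, map_prod, map_prod]
  congr 1
  · refine Finset.prod_congr rfl fun i _ => ?_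
    rw [← card_quotient_eq_absNorm_map hφ hf (sup_span_natCast_eq_top (hpmem i) (hpf i)), h𝔭 i]
  · refine Finset.prod_congr rfl fun j _ => ?_
    rw [_root_.map_pow, absNorm_span_natCast_of_finrank_eq_two hdeg, ← pow_mul,
      Nat.mul_div_cancel' (even_iff_two_dvd.mp (heven j))]

theorem exists_eq_prod_mul_prod_span_pow_of_card_quotient_eq (hp : ∀ i, (p i).Prime)
    (hpnotinert : ∀ i, ¬(span {(p i : 𝓞 K)}).IsPrime) (hq : ∀ j, (q j).Prime)
    (hqinj : Function.Injective q) (hqinert : ∀ j, (span {(q j : 𝓞 K)}).IsPrime)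
    {𝔞 : Ideal R} (h𝔞 : Nat.card (R ⧸ 𝔞) = (∏ i, p i) * ∏ j, q j ^ e j)
    (hmf : ((∏ i, p i) * ∏ j, q j ^ e j).Coprime f) :
    (∀ j, Even (e j)) ∧ ∃ 𝔭 : Fin r → Ideal R, (∀ i, (𝔭 i).IsPrime) ∧
      (∀ i, Nat.card (R ⧸ 𝔭 i) = p i) ∧
      𝔞 = (∏ i, 𝔭 i) * ∏ j, span {(q j : R)} ^ (e j / 2) := by
  have h𝔞f := sup_span_natCast_eq_top (h𝔞 ▸ natCast_card_quotient_mem 𝔞) hmf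
  obtain ⟨heven, 𝔔, h𝔔prime, h𝔔, hdecomp⟩ :=
    NumberField.exists_eq_prod_mul_prod_span_pow_of_absNorm_eq hdeg hp hpnotinert hq hqinert
      hqinj (𝔞.map φ) (by rw [← card_quotient_eq_absNorm_map hφ hf h𝔞f, h𝔞])
  have h𝔔f : ∀ i, (𝔔 i).comap φ ⊔ span {(f : R)} = ⊤ := fun i =>
    sup_span_natCast_eq_top (by rw [mem_comap, map_natCast, ← h𝔔 i]; exact absNorm_mem _) (hpf i)
  have h𝔭 : ∀ i, Nat.card (R ⧸ (𝔔 i).comap φ) = p i := fun i => by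
    rw [card_quotient_comap_of_comap_sup_span_eq_top hf (h𝔔f i), ← Submodule.cardQuot_apply,
      ← absNorm_apply, h𝔔 i]
  refine ⟨heven, fun i => (𝔔 i).comap φ, fun i => (h𝔔prime i).comap φ, h𝔭, ?_⟩
  set 𝔟 := (∏ i, (𝔔 i).comap φ) * ∏ j, span {(q j : R)} ^ (e j / 2)
  have h𝔟f : 𝔟 ⊔ span {(f : R)} = ⊤ := sup_span_natCast_eq_top
    (natCast_prod_mul_prod_pow_mem_prod_mul_prod_span_pow fun i =>
      h𝔭 i ▸ natCast_card_quotient_mem _) hmf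
  have hmap : 𝔟.map φ = 𝔞.map φ := by
    simp only [𝔟, map_prod_mul_prod_span_pow, hdecomp,
      map_comap_of_comap_sup_span_eq_top hf (h𝔔f _)]
  rw [← comap_map_of_sup_span_eq_top hf hφ h𝔞f, ← hmap, comap_map_of_sup_span_eq_top hf hφ h𝔟f]

end Order

theorem norm_decomposition_order_coprime_case_general
    (K : Type*) [Field K] [NumberField K]
    (hdeg : Module.finrank ℚ K = 2)
    (O : Subring K) (hO : IsQuadraticOrder K O)
    (f : ℕ) (hf : orderConductor K O = f)
    (𝔞 : Ideal O)
    (m : ℕ) (hmf : Nat.Coprime m f)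
    (r s : ℕ) (p : Fin r → ℕ) (q : Fin s → ℕ) (e : Fin s → ℕ)
    (hp : ∀ i, (p i).Prime) (hpf : ∀ i, Nat.Coprime (p i) f)
    (hpnotinert : ∀ i, ¬(Ideal.span {((p i : ℕ) : 𝓞 K)} : Ideal (𝓞 K)).IsPrime)
    (hq : ∀ j, (q j).Prime)
    (hqinj : Function.Injective q)
    (hqinert : ∀ j, (Ideal.span {((q j : ℕ) : 𝓞 K)} : Ideal (𝓞 K)).IsPrime)
    (hmfact : m = (∏ i, p i) * ∏ j, q j ^ e j) :
    Nat.card (↥O ⧸ 𝔞) = m ↔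
      (∀ j, Even (e j)) ∧
      ∃ 𝔭 : Fin r → Ideal O,
        (∀ i, (𝔭 i).IsPrime) ∧ (∀ i, Nat.card (↥O ⧸ 𝔭 i) = p i) ∧
        𝔞 = (∏ i, 𝔭 i) *
          ∏ j, (Ideal.span {((q j : ℕ) : O)} : Ideal O) ^ (e j / 2) := by
  obtain ⟨φ, hφ, hcond⟩ := hO.exists_injective_ringHom_conductor
  rw [hf] at hcond
  subst hmfact
  refine ⟨fun h𝔞 => exists_eq_prod_mul_prod_span_pow_of_card_quotient_eq hφ hcond hdeg hpf hp
    hpnotinert hq hqinj hqinert h𝔞 hmf, ?_⟩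
  rintro ⟨heven, 𝔭, -, h𝔭, rfl⟩
  exact card_quotient_prod_mul_prod_span_pow hφ hcond hdeg hpf h𝔭 heven hmf

theorem norm_decomposition_order_coprime_case
    (K : Type*) [Field K] [NumberField K]
    (hdeg : Module.finrank ℚ K = 2) (himag : IsEmpty (K →+* ℝ))
    (O : Subring K) (hO : IsQuadraticOrder K O)
    (f : ℕ) (hf : orderConductor K O = f)
    (𝔞 : Ideal O) (h𝔞 : IsProperIdeal O 𝔞)
    (m : ℕ) (hm : 0 < m) (hmf : Nat.Coprime m f)
    (r s : ℕ) (p : Fin r → ℕ) (q : Fin s → ℕ) (e : Fin s → ℕ)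
    (hp : ∀ i, (p i).Prime) (hpf : ∀ i, Nat.Coprime (p i) f)
    (hpnotinert : ∀ i, ¬(Ideal.span {((p i : ℕ) : 𝓞 K)} : Ideal (𝓞 K)).IsPrime)
    (hq : ∀ j, (q j).Prime) (hqf : ∀ j, Nat.Coprime (q j) f)
    (hqinj : Function.Injective q)
    (hqinert : ∀ j, (Ideal.span {((q j : ℕ) : 𝓞 K)} : Ideal (𝓞 K)).IsPrime)
    (he : ∀ j, 0 < e j)
    (hmfact : m = (∏ i, p i) * ∏ j, q j ^ e j) :
    Nat.card (↥O ⧸ 𝔞) = m ↔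
      (∀ j, Even (e j)) ∧
      ∃ 𝔭 : Fin r → Ideal O,
        (∀ i, (𝔭 i).IsPrime) ∧ (∀ i, Nat.card (↥O ⧸ 𝔭 i) = p i) ∧
        𝔞 = (∏ i, 𝔭 i) *
          ∏ j, (Ideal.span {((q j : ℕ) : O)} : Ideal O) ^ (e j / 2) :=
  norm_decomposition_order_coprime_case_general K hdeg O hO f hf 𝔞 m hmf r s p q e hp hpf hpnotinert
    hq hqinj hqinert hmfact
end

section
/- Let O and O' be orders in an imaginary quadratic field K with O ⊆ O'. If 𝔞 is a proper O-ideal, then 𝔞O' (the O'-ideal generated by 𝔞) is a proper O'-ideal. -/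
open Submodule

open Submodule.IsPrincipal in
theorem exists_eq_smul_span_range_eq_top {R ι : Type*} [CommRing R] [IsDomain R]
    [IsPrincipalIdealRing R] {v : ι → R} (hv : v ≠ 0) :
    ∃ (d : R) (w : ι → R), d ≠ 0 ∧ v = d • w ∧ Ideal.span (Set.range w) = ⊤ := by
  set J := Ideal.span (Set.range v)
  have hd : generator J ≠ 0 := by
    rw [Ne, ← eq_bot_iff_generator_eq_zero, Ideal.span_eq_bot]
    contrapose! hv
    exact funext fun i => hv _ ⟨i, rfl⟩
  have hdvd (i : ι) : ∃ w, v i = generator J * w := by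
    obtain ⟨s, hs⟩ := (mem_iff_eq_smul_generator J).mp (Ideal.subset_span ⟨i, rfl⟩)
    exact ⟨s, by rw [hs, smul_eq_mul, mul_comm]⟩
  choose w hw using hdvd
  refine ⟨_, w, hd, funext hw, (Ideal.span_singleton_mul_right_inj hd).mp ?_⟩
  calc Ideal.span {generator J} * Ideal.span (Set.range w)
      = J := by
        rw [Ideal.span_mul_span', Set.singleton_mul, ← Set.range_comp]
        exact congrArg _ (congrArg _ (funext hw)).symm
    _ = Ideal.span {generator J} * ⊤ := by rw [Ideal.mul_top, Ideal.span_singleton_generator]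

theorem exists_int_quadratic_relation {K : Type*} [Field K] [CharZero K]
    (hK : Module.finrank ℚ K = 2) (τ : K) :
    ∃ a b c : ℤ, a * τ ^ 2 + b * τ + c = 0 ∧ Ideal.span {a, b, c} = ⊤ := by
  have : FiniteDimensional ℚ K := Module.finite_of_finrank_eq_succ hK
  have hdep : ¬ LinearIndependent ℤ ![τ ^ 2, τ, 1] := by
    rw [LinearIndependent.iff_fractionRing ℤ ℚ]
    intro h
    simpa [hK] using h.fintype_card_le_finrank
  obtain ⟨v, hv, i, hi⟩ := Fintype.not_linearIndependent_iff.mp hdep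
  obtain ⟨d, w, hd, rfl, hw⟩ := exists_eq_smul_span_range_eq_top (ne_of_apply_ne (· i) hi)
  refine ⟨w 0, w 1, w 2, by simpa [Fin.sum_univ_three, hd, mul_assoc, ← mul_add] using hv, ?_⟩
  rw [← hw]
  congr
  ext
  simp [Fin.exists_fin_succ, eq_comm]

section QuadraticLattice

variable {K : Type*} [Field K] {α τ : K} {a b c : ℤ}

theorem mul_mem_span_pair_of_quadratic (hrel : a * τ ^ 2 + b * τ + c = 0) :
    ∀ x ∈ span ℤ {α, α * τ}, a * τ * x ∈ span ℤ {α, α * τ} := by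
  suffices span ℤ {α, α * τ} ≤ (span ℤ {α, α * τ}).comap (LinearMap.mulLeft ℤ (a * τ)) from
    fun x hx => this hx
  rw [span_le]
  rintro _ (rfl | rfl) <;> refine mem_span_pair.mpr ?_
  · exact ⟨0, a, by simp only [zsmul_eq_mul, LinearMap.mulLeft_apply]; ring⟩
  · refine ⟨-c, -b, ?_⟩
    simp only [zsmul_eq_mul, LinearMap.mulLeft_apply, Int.cast_neg]
    linear_combination -α * hrel

theorem one_mem_span_intCast {R : Type*} [Ring R] {s : Set ℤ} (hs : Ideal.span s = ⊤) :
    (1 : R) ∈ span ℤ ((↑) '' s) := by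
  have h1 : (1 : ℤ) ∈ span ℤ s := (show span ℤ s = ⊤ from hs) ▸ mem_top
  have := mem_map_of_mem (f := Algebra.linearMap ℤ R) h1
  rwa [map_span, Algebra.linearMap_apply, map_one] at this

/-- For `a ≠ 0` the second factor is `(a / α) (ℤ + ℤτ')`, with `τ' = -b/a - τ` the conjugate
of `τ`. -/
theorem span_pair_mul_span_pair_of_quadratic (hα : α ≠ 0) (hrel : a * τ ^ 2 + b * τ + c = 0)
    (hprim : Ideal.span {a, b, c} = ⊤) :
    span ℤ {α, α * τ} * span ℤ {a / α, (b + a * τ) / α} = span ℤ {1, a * τ} := by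
  refine le_antisymm ?_ ?_
  · rw [span_mul_span, span_le]
    rintro _ ⟨x, (rfl | rfl), y, (rfl | rfl), rfl⟩ <;> refine mem_span_pair.mpr ?_
    · exact ⟨a, 0, by field_simp; simp⟩
    · exact ⟨b, 1, by field_simp; simp⟩
    · exact ⟨0, 1, by field_simp; simp⟩
    · refine ⟨-c, 0, ?_⟩
      field_simp
      linear_combination -hrel
  · set P := span ℤ {α, α * τ} * span ℤ {a / α, (b + a * τ) / α}
    have hmem {x y : K} (hx : x ∈ ({α, α * τ} : Set K))
        (hy : y ∈ ({(a : K) / α, (b + a * τ) / α} : Set K)) : x * y ∈ P :=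
      mul_mem_mul (subset_span hx) (subset_span hy)
    have ha : (a : K) ∈ P := by convert hmem (.inl rfl) (.inl rfl) using 1; field_simp
    have haτ : a * τ ∈ P := by convert hmem (.inr rfl) (.inl rfl) using 1; field_simp
    have hb : (b : K) ∈ P := by
      convert sub_mem (hmem (.inl rfl) (.inr rfl)) haτ using 1; field_simp; ring
    have hc : (c : K) ∈ P := by
      convert neg_mem (hmem (.inr rfl) (.inr rfl)) using 1; field_simp; linear_combination hrel
    rw [span_le]
    rintro _ (rfl | rfl)
    · refine span_le.mpr ?_ (one_mem_span_intCast hprim)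
      rintro _ ⟨x, hx, rfl⟩
      rcases hx with rfl | rfl | rfl
      exacts [ha, hb, hc]
    · exact haτ

end QuadraticLattice

namespace Subring

variable {K : Type*} [Field K]

abbrev toIntSubmodule (O : Subring K) : Submodule ℤ K :=
  Subalgebra.toSubmodule (subalgebraOfSubring O)

theorem toIntSubmodule_mul_of_le {O O' : Subring K} (h : O ≤ O') :
    O.toIntSubmodule * O'.toIntSubmodule = O'.toIntSubmodule := by
  rw [Subalgebra.mul_toSubmodule, sup_eq_right.mpr fun x hx => h hx]

end Subring

namespace Ideal

variable {K : Type*} [Field K] {O : Subring K}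

def coeIntSubmodule (𝔞 : Ideal O) : Submodule ℤ K :=
  (𝔞.restrictScalars ℤ).map O.subtype.toIntAlgHom.toLinearMap

theorem mem_coeIntSubmodule {𝔞 : Ideal O} {x : K} :
    x ∈ 𝔞.coeIntSubmodule ↔ ∃ a ∈ 𝔞, (a : K) = x :=
  Iff.rfl

theorem forall_mul_mem_coeIntSubmodule_iff {𝔞 : Ideal O} {β : K} :
    (∀ x ∈ 𝔞.coeIntSubmodule, β * x ∈ 𝔞.coeIntSubmodule) ↔
      ∀ a ∈ 𝔞, ∃ c ∈ 𝔞, β * (a : K) = c := by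
  simp [mem_coeIntSubmodule, eq_comm]

theorem toIntSubmodule_mul_coeIntSubmodule_le (𝔞 : Ideal O) :
    O.toIntSubmodule * 𝔞.coeIntSubmodule ≤ 𝔞.coeIntSubmodule := by
  rw [Submodule.mul_le]
  rintro r hr _ ⟨a, ha, rfl⟩
  exact ⟨⟨r, hr⟩ * a, 𝔞.mul_mem_left _ ha, rfl⟩

theorem coeIntSubmodule_map_inclusion {O' : Subring K} (h : O ≤ O') (𝔞 : Ideal O) :
    (𝔞.map (Subring.inclusion h)).coeIntSubmodule = 𝔞.coeIntSubmodule * O'.toIntSubmodule := by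
  refine le_antisymm ?_ (Submodule.mul_le.mpr ?_)
  · rintro _ ⟨y, hy, rfl⟩
    induction hy using Submodule.span_induction with
    | mem y hy =>
      obtain ⟨a, ha, rfl⟩ := hy
      simpa using Submodule.mul_mem_mul (mem_coeIntSubmodule.mpr ⟨a, ha, rfl⟩)
        (show (1 : K) ∈ O'.toIntSubmodule from O'.one_mem)
    | zero => exact zero_mem _
    | add y z _ _ hy hz => exact add_mem hy hz
    | smul r y _ hy =>
      have hry := Submodule.mul_mem_mul (show (r : K) ∈ O'.toIntSubmodule from r.2) hy
      rwa [mul_left_comm, Subring.toIntSubmodule_mul_of_le le_rfl] at hry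
  · rintro _ ⟨a, ha, rfl⟩ m hm
    exact ⟨Subring.inclusion h a * ⟨m, hm⟩, mul_mem_right _ _ (mem_map_of_mem _ ha), rfl⟩

theorem exists_coeIntSubmodule_eq_span_pair (hO : IsQuadraticOrder K O) {𝔞 : Ideal O}
    (h𝔞 : 𝔞 ≠ ⊥) : ∃ α β : K, α ≠ 0 ∧ 𝔞.coeIntSubmodule = Submodule.span ℤ {α, β} := by
  obtain ⟨_, hrank⟩ := hO
  have : Module.Finite ℤ O := Module.finite_of_finrank_eq_succ hrank
  let e := selfBasis (Module.finBasisOfFinrankEq ℤ O hrank) 𝔞 h𝔞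
  refine ⟨(e 0 : K), (e 1 : K), by simpa using e.ne_zero 0, le_antisymm ?_ ?_⟩
  · rintro _ ⟨x, hx, rfl⟩
    have hsum := congrArg (fun y : 𝔞 => ((y : O) : K)) (e.sum_repr ⟨x, hx⟩)
    rw [Fin.sum_univ_two] at hsum
    refine Submodule.mem_span_pair.mpr ⟨e.repr ⟨x, hx⟩ 0, e.repr ⟨x, hx⟩ 1, ?_⟩
    simpa using hsum
  · rw [Submodule.span_le]
    rintro _ (rfl | rfl)
    exacts [⟨e 0, (e 0).2, rfl⟩, ⟨e 1, (e 1).2, rfl⟩]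

end Ideal

section ProperIdeal

variable {K : Type*} [Field K]

theorem IsProperIdeal.exists_coeIntSubmodule_mul_eq [CharZero K] (hK : Module.finrank ℚ K = 2)
    {O : Subring K} (hO : IsQuadraticOrder K O) {𝔞 : Ideal O} (h𝔞 : IsProperIdeal O 𝔞) :
    ∃ C : Submodule ℤ K, 𝔞.coeIntSubmodule * C = O.toIntSubmodule := by
  obtain ⟨α, β, hα, hT⟩ := Ideal.exists_coeIntSubmodule_eq_span_pair hO h𝔞.1
  set τ := β / α
  rw [show β = α * τ from (mul_div_cancel₀ β hα).symm] at hT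
  obtain ⟨a, b, c, hrel, hprim⟩ := exists_int_quadratic_relation hK τ
  have haτ : a * τ ∈ O := by
    rw [← h𝔞.2, ← Ideal.forall_mul_mem_coeIntSubmodule_iff, hT]
    exact mul_mem_span_pair_of_quadratic hrel
  set C := span ℤ {a / α, (b + a * τ) / α}
  have hTC : 𝔞.coeIntSubmodule * C = span ℤ {1, a * τ} := by
    rw [hT, span_pair_mul_span_pair_of_quadratic hα hrel hprim]
  refine ⟨C, le_antisymm ?_ ?_⟩
  · rw [hTC, span_le]
    rintro _ (rfl | rfl)
    exacts [O.one_mem, haτ]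
  · have h1 : (1 : K) ∈ 𝔞.coeIntSubmodule * C := hTC ▸ subset_span (.inl rfl)
    calc O.toIntSubmodule
        = O.toIntSubmodule * 1 := (mul_one _).symm
      _ ≤ O.toIntSubmodule * (𝔞.coeIntSubmodule * C) := mul_le_mul_right (one_le.mpr h1) _
      _ = O.toIntSubmodule * 𝔞.coeIntSubmodule * C := (mul_assoc _ _ _).symm
      _ ≤ 𝔞.coeIntSubmodule * C :=
        mul_le_mul_left (Ideal.toIntSubmodule_mul_coeIntSubmodule_le 𝔞) _

theorem isProperIdeal_of_coeIntSubmodule_mul_eq {O : Subring K} {𝔞 : Ideal O} (h𝔞 : 𝔞 ≠ ⊥)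
    {C : Submodule ℤ K} (hC : 𝔞.coeIntSubmodule * C = O.toIntSubmodule) : IsProperIdeal O 𝔞 := by
  refine ⟨h𝔞, fun β => ⟨fun hβ => ?_, fun hβ a ha => ⟨⟨β, hβ⟩ * a, 𝔞.mul_mem_left _ ha, rfl⟩⟩⟩
  rw [← Ideal.forall_mul_mem_coeIntSubmodule_iff] at hβ
  have hβ' : span ℤ {β} * 𝔞.coeIntSubmodule ≤ 𝔞.coeIntSubmodule := fun x hx => by
    obtain ⟨y, hy, rfl⟩ := mem_span_singleton_mul.mp hx
    exact hβ y hy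
  have h1 : β * 1 ∈ span ℤ {β} * (𝔞.coeIntSubmodule * C) :=
    mul_mem_mul (mem_span_singleton_self β) (hC ▸ O.one_mem)
  rw [← mul_assoc, mul_one] at h1
  change β ∈ O.toIntSubmodule
  exact hC ▸ mul_le_mul_left hβ' C h1

end ProperIdeal

theorem proper_ideal_extension_general (K : Type*) [Field K] [NumberField K]
    (hdeg : Module.finrank ℚ K = 2)
    (O O' : Subring K) (hO : IsQuadraticOrder K O)
    (h : O ≤ O') (𝔞 : Ideal O) (h𝔞 : IsProperIdeal O 𝔞) :
    IsProperIdeal O' (Ideal.map (Subring.inclusion h) 𝔞) := by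
  obtain ⟨C, hC⟩ := h𝔞.exists_coeIntSubmodule_mul_eq hdeg hO
  refine isProperIdeal_of_coeIntSubmodule_mul_eq (C := C) ?_ ?_
  · exact (Ideal.map_eq_bot_iff_of_injective (Subring.inclusion_injective h)).not.mpr h𝔞.1
  · rw [Ideal.coeIntSubmodule_map_inclusion, mul_right_comm, hC,
      Subring.toIntSubmodule_mul_of_le h]

theorem proper_ideal_extension (K : Type*) [Field K] [NumberField K]
    (hdeg : Module.finrank ℚ K = 2) (himag : IsEmpty (K →+* ℝ))
    (O O' : Subring K) (hO : IsQuadraticOrder K O) (hO' : IsQuadraticOrder K O')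
    (h : O ≤ O') (𝔞 : Ideal O) (h𝔞 : IsProperIdeal O 𝔞) :
    IsProperIdeal O' (Ideal.map (Subring.inclusion h) 𝔞) :=
  proper_ideal_extension_general K hdeg O O' hO h 𝔞 h𝔞
end

section
/- Let O and O' be orders in an imaginary quadratic field K with O ⊆ O', and let r = [O' : O] be the relative conductor of O in O'. If 𝔞' is a nonzero O'-ideal prime to r (i.e., 𝔞' + rO' = O'), then N(𝔞' ∩ O) = N(𝔞'); in particular, 𝔞' ∩ O is an O-ideal prime to r. -/
/-!
The index `r = [O' : O]` kills the group `O' / O`, so `r • O' ⊆ O`. If `𝔞' + r O' = O'`, every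
`x ∈ O'` is `a + c r` with `a ∈ 𝔞'` and `c r ∈ O`, hence `O → O' / 𝔞'` is surjective; its kernel is
`𝔞' ∩ O`, which gives `O / (𝔞' ∩ O) ≃ O' / 𝔞'`. Writing `1 = a + c r` and lifting `c` to `d ∈ O`
modulo `𝔞'`, the element `1 - d r` lies in `𝔞' ∩ O`, so `𝔞' ∩ O` is prime to `r`.
-/

theorem Subring.natCast_relIndex_mul_mem {R : Type*} [Ring R] {O O' : Subring R} {x : R}
    (hx : x ∈ O') : (O.toAddSubgroup.relIndex O'.toAddSubgroup : R) * x ∈ O := by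
  simpa only [nsmul_eq_mul, Subring.mem_toAddSubgroup] using O.toAddSubgroup.nsmul_relIndex_mem hx

namespace Ideal

variable {R S : Type*} [CommRing R] [CommRing S] (f : R →+* S) {r : R} {I : Ideal S}

theorem quotientMk_comp_surjective_of_sup_span_eq_top (hr : ∀ y : S, f r * y ∈ f.range)
    (hI : I ⊔ span {f r} = ⊤) : Function.Surjective ((Quotient.mk I).comp f) := by
  intro y
  obtain ⟨x, rfl⟩ := Quotient.mk_surjective y
  have hx : x ∈ span {f r} ⊔ I := by simp [sup_comm, hI]
  obtain ⟨c, a, ha, rfl⟩ := mem_span_singleton_sup.mp hx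
  obtain ⟨d, hd⟩ := hr c
  refine ⟨d, ?_⟩
  rw [RingHom.comp_apply, hd, Quotient.eq, mul_comm]
  simpa using neg_mem ha

theorem comap_sup_span_eq_top_of_sup_span_eq_top (hr : ∀ y : S, f r * y ∈ f.range)
    (hI : I ⊔ span {f r} = ⊤) : I.comap f ⊔ span {r} = ⊤ := by
  have h1 : 1 ∈ span {f r} ⊔ I := by simp [sup_comm, hI]
  obtain ⟨c, a, ha, hca⟩ := mem_span_singleton_sup.mp h1
  obtain ⟨d, hd⟩ := quotientMk_comp_surjective_of_sup_span_eq_top f hr hI (Quotient.mk I c)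
  have hdc : f d - c ∈ I := Quotient.eq.mp hd
  rw [sup_comm, eq_top_iff_one, mem_span_singleton_sup]
  refine ⟨d, 1 - d * r, ?_, by ring⟩
  rw [mem_comap, map_sub, map_one, map_mul, ← hca]
  -- `c * f r + a - f d * f r = a - (f d - c) * f r`
  convert sub_mem ha (mul_mem_right (f r) I hdc) using 1
  ring

noncomputable def quotientComapEquivOfSupSpanEqTop (hr : ∀ y : S, f r * y ∈ f.range)
    (hI : I ⊔ span {f r} = ⊤) : R ⧸ I.comap f ≃+* S ⧸ I :=
  (quotEquivOfEq (by rw [← RingHom.comap_ker, mk_ker])).trans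
    (RingHom.quotientKerEquivOfSurjective (quotientMk_comp_surjective_of_sup_span_eq_top f hr hI))

end Ideal

theorem norm_of_contraction_of_ideal_prime_to_relative_conductor_general
    (K : Type*) [Field K]
    (O O' : Subring K)
    (h : O ≤ O')
    (r : ℕ) (hr : AddSubgroup.relIndex O.toAddSubgroup O'.toAddSubgroup = r)
    (𝔞' : Ideal O')
    (hprime : 𝔞' ⊔ Ideal.span {(r : O')} = ⊤) :
    Nat.card (↥O ⧸ Ideal.comap (Subring.inclusion h) 𝔞') = Nat.card (↥O' ⧸ 𝔞') ∧
      Ideal.comap (Subring.inclusion h) 𝔞' ⊔ Ideal.span {(r : O)} = ⊤ := by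
  have hconductor : ∀ y : O', Subring.inclusion h (r : O) * y ∈ (Subring.inclusion h).range :=
    fun y => ⟨⟨_, hr ▸ Subring.natCast_relIndex_mul_mem y.2⟩, Subtype.ext (by simp)⟩
  have hcoprime : 𝔞' ⊔ Ideal.span {Subring.inclusion h (r : O)} = ⊤ := by
    rwa [map_natCast]
  exact ⟨Nat.card_congr (Ideal.quotientComapEquivOfSupSpanEqTop _ hconductor hcoprime).toEquiv,
    Ideal.comap_sup_span_eq_top_of_sup_span_eq_top _ hconductor hcoprime⟩

theorem norm_of_contraction_of_ideal_prime_to_relative_conductor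
    (K : Type*) [Field K] [NumberField K]
    (hdeg : Module.finrank ℚ K = 2) (himag : IsEmpty (K →+* ℝ))
    (O O' : Subring K) (hO : IsQuadraticOrder K O) (hO' : IsQuadraticOrder K O')
    (h : O ≤ O')
    (r : ℕ) (hr : AddSubgroup.relIndex O.toAddSubgroup O'.toAddSubgroup = r)
    (𝔞' : Ideal O') (h𝔞' : 𝔞' ≠ ⊥)
    (hprime : 𝔞' ⊔ Ideal.span {(r : O')} = ⊤) :
    Nat.card (↥O ⧸ Ideal.comap (Subring.inclusion h) 𝔞') = Nat.card (↥O' ⧸ 𝔞') ∧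
      Ideal.comap (Subring.inclusion h) 𝔞' ⊔ Ideal.span {(r : O)} = ⊤ :=
  norm_of_contraction_of_ideal_prime_to_relative_conductor_general K O O' h r hr 𝔞' hprime
end

section
/- Let O and O' be orders in an imaginary quadratic field K with O ⊆ O', and let r = [O' : O] be the relative conductor of O in O'. If 𝔞' is a nonzero O'-ideal prime to r (i.e., 𝔞' + rO' = O'), then (𝔞' ∩ O)O' = 𝔞', where (𝔞' ∩ O)O' is the O'-ideal generated by 𝔞' ∩ O. -/
namespace Ideal

variable {R S : Type*} [Ring R] [CommRing S] (f : R →+* S)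

theorem mem_map_comap_of_mem_range {J : Ideal S} {y : S} (hy : y ∈ J) (hyf : y ∈ f.range) :
    y ∈ (J.comap f).map f := by
  obtain ⟨x, rfl⟩ := hyf
  exact mem_map_of_mem f (mem_comap.mpr hy)

theorem map_comap_eq_self_of_sup_span_eq_top {J : Ideal S} {c : S}
    (hc : ∀ s, c * s ∈ f.range) (hJc : J ⊔ span {c} = ⊤) : (J.comap f).map f = J := by
  refine le_antisymm map_comap_le fun y hy => ?_
  have hone : (1 : S) ∈ J ⊔ span {c} := hJc ▸ Submodule.mem_top
  obtain ⟨a, ha, _, hbc, hab⟩ := Submodule.mem_sup.mp hone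
  obtain ⟨b, rfl⟩ := mem_span_singleton'.mp hbc
  have haf : a ∈ f.range := by
    rw [eq_sub_of_add_eq hab, mul_comm]
    exact sub_mem (one_mem _) (hc b)
  have hy_eq : y = a * y + b * (c * y) := by linear_combination (-y) * hab
  rw [hy_eq]
  exact add_mem (mul_mem_right _ _ (mem_map_comap_of_mem_range f ha haf))
    (mul_mem_left _ _ (mem_map_comap_of_mem_range f (mul_mem_left _ _ hy) (hc y)))

end Ideal

theorem Subring.relIndex_mul_mem {K : Type*} [Ring K] {O O' : Subring K} {x : K} (hx : x ∈ O') :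
    (O.toAddSubgroup.relIndex O'.toAddSubgroup : K) * x ∈ O := by
  rw [← nsmul_eq_mul]
  exact O.toAddSubgroup.nsmul_relIndex_mem (K := O'.toAddSubgroup) hx

theorem extension_of_contraction_of_ideal_prime_to_relative_conductor_general
    (K : Type*) [Field K]
    (O O' : Subring K)
    (h : O ≤ O')
    (r : ℕ) (hr : AddSubgroup.relIndex O.toAddSubgroup O'.toAddSubgroup = r)
    (𝔞' : Ideal O')
    (hprime : 𝔞' ⊔ Ideal.span {(r : O')} = ⊤) :
    Ideal.map (Subring.inclusion h) (Ideal.comap (Subring.inclusion h) 𝔞') = 𝔞' := by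
  refine Ideal.map_comap_eq_self_of_sup_span_eq_top _ (fun s => ?_) hprime
  have hrs : (r : K) * s ∈ O := hr ▸ Subring.relIndex_mul_mem s.2
  exact ⟨⟨_, hrs⟩, Subtype.ext (by simp)⟩

theorem extension_of_contraction_of_ideal_prime_to_relative_conductor
    (K : Type*) [Field K] [NumberField K]
    (hdeg : Module.finrank ℚ K = 2) (himag : IsEmpty (K →+* ℝ))
    (O O' : Subring K) (hO : IsQuadraticOrder K O) (hO' : IsQuadraticOrder K O')
    (h : O ≤ O')
    (r : ℕ) (hr : AddSubgroup.relIndex O.toAddSubgroup O'.toAddSubgroup = r)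
    (𝔞' : Ideal O') (h𝔞' : 𝔞' ≠ ⊥)
    (hprime : 𝔞' ⊔ Ideal.span {(r : O')} = ⊤) :
    Ideal.map (Subring.inclusion h) (Ideal.comap (Subring.inclusion h) 𝔞') = 𝔞' :=
  extension_of_contraction_of_ideal_prime_to_relative_conductor_general K O O' h r hr 𝔞' hprime
end

section
/- Let O and O' be orders in an imaginary quadratic field K with O ⊆ O', and let r = [O' : O] be the relative conductor of O in O'. If 𝔞' is a proper O'-ideal prime to r (i.e., 𝔞' + rO' = O'), then 𝔞' ∩ O is a proper O-ideal. -/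
theorem Subring.natCast_mul_mem_of_relIndex_eq {K : Type*} [Ring K] {O O' : Subring K} {r : ℕ}
    (hr : O.toAddSubgroup.relIndex O'.toAddSubgroup = r) {x : K} (hx : x ∈ O') :
    (r : K) * x ∈ O := by
  simpa [← hr, nsmul_eq_mul] using O.toAddSubgroup.nsmul_relIndex_mem (K := O'.toAddSubgroup) hx

namespace Subring

variable {K : Type*} [CommRing K] {O O' : Subring K} (h : O ≤ O') {r : ℕ}
  (hrO : ∀ x ∈ O', (r : K) * x ∈ O) {𝔞' : Ideal O'}

include hrO in
theorem exists_mem_comap_inclusion_add_natCast_mul_eq_one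
    (hprime : 𝔞' ⊔ Ideal.span {(r : O')} = ⊤) :
    ∃ a ∈ 𝔞'.comap (inclusion h), ∃ y : O', (a : K) + r * y = 1 := by
  obtain ⟨y, a, ha, hya⟩ :=
    Ideal.mem_span_singleton_sup.mp (sup_comm 𝔞' _ ▸ hprime ▸ Submodule.mem_top (x := 1))
  have hay : (a : K) + r * y = 1 := by
    simpa [add_comm, mul_comm] using congrArg Subtype.val hya
  have haO : (a : K) ∈ O := eq_sub_of_add_eq hay ▸ sub_mem (one_mem O) (hrO y y.2)
  exact ⟨⟨a, haO⟩, ha, y, hay⟩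

theorem natCast_mul_mem_comap_inclusion {x : O'} (hx : x ∈ 𝔞') :
    (⟨r * x, hrO x x.2⟩ : O) ∈ 𝔞'.comap (inclusion h) := by
  have : inclusion h ⟨r * x, hrO x x.2⟩ = (r : O') * x := Subtype.ext (by simp)
  simpa [Ideal.mem_comap, this] using Ideal.mul_mem_left 𝔞' (r : O') hx

variable {a : O} {y : O'} (hay : (a : K) + r * y = 1)
include hrO hay

theorem mem_of_mem_of_mul_mem {β : K} (hβ' : β ∈ O') (hβa : β * a ∈ O) : β ∈ O := by
  have : β = β * a + r * (β * y) := by linear_combination -β * hay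
  exact this ▸ add_mem hβa (hrO _ (mul_mem hβ' y.2))

theorem comap_inclusion_ne_bot (ha : a ∈ 𝔞'.comap (inclusion h)) (h𝔞' : 𝔞' ≠ ⊥) :
    𝔞'.comap (inclusion h) ≠ ⊥ := by
  obtain ⟨x, hx, hx0⟩ := Submodule.exists_mem_ne_zero_of_ne_bot h𝔞'
  intro hbot
  have ha0 : (a : K) = 0 := by simpa [hbot] using ha
  have hrx0 : (r : K) * x = 0 := by
    simpa [hbot] using natCast_mul_mem_comap_inclusion h hrO hx
  apply hx0
  ext
  calc (x : K) = a * x + r * x * y := by linear_combination (-(x : K)) * hay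
    _ = 0 := by rw [ha0, hrx0]; ring

theorem forall_mul_mem_of_forall_mul_mem_comap_inclusion (ha : a ∈ 𝔞'.comap (inclusion h))
    {β : K}
    (hβ : ∀ b ∈ 𝔞'.comap (inclusion h), ∃ c ∈ 𝔞'.comap (inclusion h), β * (b : K) = c) :
    ∀ x ∈ 𝔞', ∃ c ∈ 𝔞', β * (x : K) = c := by
  intro x hx
  obtain ⟨c, hc, hβa⟩ := hβ a ha
  obtain ⟨d, hd, hβrx⟩ :=
    hβ _ (natCast_mul_mem_comap_inclusion h hrO (Ideal.mul_mem_right y _ hx))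
  refine ⟨inclusion h c * x + inclusion h d, Ideal.add_mem _ (Ideal.mul_mem_left _ _ hx) hd, ?_⟩
  push_cast [coe_inclusion] at hβrx ⊢
  linear_combination -β * x * hay + x * hβa + hβrx

end Subring

theorem contraction_of_proper_ideal_prime_to_relative_conductor_general
    (K : Type*) [Field K]
    (O O' : Subring K)
    (h : O ≤ O')
    (r : ℕ) (hr : AddSubgroup.relIndex O.toAddSubgroup O'.toAddSubgroup = r)
    (𝔞' : Ideal O') (h𝔞' : IsProperIdeal O' 𝔞')
    (hprime : 𝔞' ⊔ Ideal.span {(r : O')} = ⊤) :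
    IsProperIdeal O (Ideal.comap (Subring.inclusion h) 𝔞') := by
  have hrO : ∀ x ∈ O', (r : K) * x ∈ O := fun _ => Subring.natCast_mul_mem_of_relIndex_eq hr
  obtain ⟨a, ha, y, hay⟩ :=
    Subring.exists_mem_comap_inclusion_add_natCast_mul_eq_one h hrO hprime
  refine ⟨Subring.comap_inclusion_ne_bot h hrO hay ha h𝔞'.1,
    fun β => ⟨fun hβ => ?_, fun hβ b hb => ?_⟩⟩
  · have hβO' : β ∈ O' :=
      (h𝔞'.2 β).mp (Subring.forall_mul_mem_of_forall_mul_mem_comap_inclusion h hrO hay ha hβ)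
    obtain ⟨c, -, hc⟩ := hβ a ha
    exact Subring.mem_of_mem_of_mul_mem hrO hay hβO' (hc ▸ c.2)
  · exact ⟨⟨β * b, mul_mem hβ b.2⟩, Ideal.mul_mem_left _ ⟨β, hβ⟩ hb, rfl⟩

theorem contraction_of_proper_ideal_prime_to_relative_conductor
    (K : Type*) [Field K] [NumberField K]
    (hdeg : Module.finrank ℚ K = 2) (himag : IsEmpty (K →+* ℝ))
    (O O' : Subring K) (hO : IsQuadraticOrder K O) (hO' : IsQuadraticOrder K O')
    (h : O ≤ O')
    (r : ℕ) (hr : AddSubgroup.relIndex O.toAddSubgroup O'.toAddSubgroup = r)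
    (𝔞' : Ideal O') (h𝔞' : IsProperIdeal O' 𝔞')
    (hprime : 𝔞' ⊔ Ideal.span {(r : O')} = ⊤) :
    IsProperIdeal O (Ideal.comap (Subring.inclusion h) 𝔞') :=
  contraction_of_proper_ideal_prime_to_relative_conductor_general K O O' h r hr 𝔞' h𝔞' hprime
end

section
/- Let O and O' be orders in an imaginary quadratic field K with O ⊆ O', and let r = [O' : O] be the relative conductor of O in O'. If 𝔞' and 𝔟' are proper O'-ideals prime to r (i.e., 𝔞' + rO' = O' and 𝔟' + rO' = O'), then 𝔞'𝔟' ∩ O = (𝔞' ∩ O)(𝔟' ∩ O). -/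
/-!
The index `r = [O' : O]` annihilates `O' / O`, so `r O' ⊆ O`. Let `f : A → B` be a ring map and
`c ∈ B` with `c B ⊆ f(A)`. Every ideal `I` of `B` coprime to `c` contains an element `f a` with
`1 - f a ∈ (c²)`: write `1 = α + cβ` with `α ∈ I` and take `f a = α(1 + cβ) = 1 - c²β²`, a product
of two elements of `f(A)`. Likewise `c² (I J) ⊆ f(f⁻¹ I · f⁻¹ J)`, since `c m · c n = f(a) f(b)`
with `a ∈ f⁻¹ I`, `b ∈ f⁻¹ J`. For `f x ∈ I J` this gives `x = x a b + t` with
`t ∈ f⁻¹ I · f⁻¹ J`, because `f x = f(x a b) + (1 - f(a b)) f x` and `1 - f(a b) ∈ (c²)`.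
-/

namespace Ideal

variable {A B : Type*} [CommRing A] [CommRing B] {f : A →+* B} {c : B}

theorem exists_mem_comap_one_sub_mem_span_sq (hc : ∀ γ : B, c * γ ∈ f.range) {I : Ideal B}
    (hI : I ⊔ span {c} = ⊤) : ∃ a ∈ I.comap f, 1 - f a ∈ span {c ^ 2} := by
  obtain ⟨α, hα, _, hz, hsum⟩ := Submodule.mem_sup.mp (hI ▸ Submodule.mem_top : (1 : B) ∈ I ⊔ _)
  obtain ⟨β, rfl⟩ := mem_span_singleton'.mp hz
  have hα_eq : α = 1 - c * β := by linear_combination hsum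
  obtain ⟨a, ha⟩ : α * (1 + c * β) ∈ f.range := by
    rw [hα_eq]
    exact mul_mem (sub_mem (one_mem _) (hc β)) (add_mem (one_mem _) (hc β))
  refine ⟨a, ?_, mem_span_singleton'.mpr ⟨β ^ 2, ?_⟩⟩
  · rw [mem_comap, ha]
    exact mul_mem_right _ _ hα
  · rw [ha, hα_eq]
    ring

theorem exists_mem_comap_mul_comap_eq_sq_mul (hc : ∀ γ : B, c * γ ∈ f.range) {I J : Ideal B}
    {z : B} (hz : z ∈ I * J) : ∃ t ∈ I.comap f * J.comap f, f t = c ^ 2 * z := by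
  refine Submodule.mul_induction_on hz (fun m hm n hn => ?_) fun x y hx hy => ?_
  · obtain ⟨a, ha⟩ := hc m
    obtain ⟨b, hb⟩ := hc n
    refine ⟨a * b, mul_mem_mul ?_ ?_, ?_⟩
    · rw [mem_comap, ha]
      exact mul_mem_left _ _ hm
    · rw [mem_comap, hb]
      exact mul_mem_left _ _ hn
    · rw [map_mul, ha, hb]
      ring
  · obtain ⟨t₁, ht₁, hft₁⟩ := hx
    obtain ⟨t₂, ht₂, hft₂⟩ := hy
    exact ⟨t₁ + t₂, add_mem ht₁ ht₂, by rw [map_add, hft₁, hft₂, mul_add]⟩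

theorem comap_mul_of_sup_span_eq_top (hf : Function.Injective f)
    (hc : ∀ γ : B, c * γ ∈ f.range) {I J : Ideal B} (hI : I ⊔ span {c} = ⊤)
    (hJ : J ⊔ span {c} = ⊤) : (I * J).comap f = I.comap f * J.comap f := by
  refine le_antisymm (fun x hx => ?_) (le_comap_mul f)
  obtain ⟨a, ha, hae⟩ := exists_mem_comap_one_sub_mem_span_sq hc hI
  obtain ⟨b, hb, hbe⟩ := exists_mem_comap_one_sub_mem_span_sq hc hJ
  have hab : 1 - f (a * b) ∈ span {c ^ 2} := by
    have : 1 - f (a * b) = (1 - f a) + f a * (1 - f b) := by rw [map_mul]; ring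
    rw [this]
    exact add_mem hae (mul_mem_left _ _ hbe)
  obtain ⟨w, hw⟩ := mem_span_singleton'.mp hab
  obtain ⟨t, ht, hft⟩ :=
    exists_mem_comap_mul_comap_eq_sq_mul hc (mul_mem_left (I * J) w (mem_comap.mp hx))
  have hx_eq : x = x * (a * b) + t := hf <| by
    rw [map_add, hft, map_mul]
    linear_combination (-f x) * hw
  rw [hx_eq]
  exact add_mem (mul_mem_left _ _ (mul_mem_mul ha hb)) ht

end Ideal

theorem Subring.natCast_mul_mem_range_inclusion {R : Type*} [Ring R] {S T : Subring R}
    (h : S ≤ T) (γ : T) :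
    (S.toAddSubgroup.relIndex T.toAddSubgroup : T) * γ ∈ (Subring.inclusion h).range :=
  ⟨⟨_, by
    simpa [nsmul_eq_mul] using S.toAddSubgroup.nsmul_relIndex_mem (K := T.toAddSubgroup) γ.2⟩,
    by ext; simp⟩

theorem contraction_multiplicative_on_ideals_prime_to_relative_conductor_general
    (K : Type*) [Field K]
    (O O' : Subring K)
    (h : O ≤ O')
    (r : ℕ) (hr : AddSubgroup.relIndex O.toAddSubgroup O'.toAddSubgroup = r)
    (𝔞' 𝔟' : Ideal O')
    (hprimea : 𝔞' ⊔ Ideal.span {(r : O')} = ⊤)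
    (hprimeb : 𝔟' ⊔ Ideal.span {(r : O')} = ⊤) :
    Ideal.comap (Subring.inclusion h) (𝔞' * 𝔟') =
      Ideal.comap (Subring.inclusion h) 𝔞' * Ideal.comap (Subring.inclusion h) 𝔟' := by
  subst hr
  exact Ideal.comap_mul_of_sup_span_eq_top (Set.inclusion_injective h)
    (Subring.natCast_mul_mem_range_inclusion h) hprimea hprimeb

theorem contraction_multiplicative_on_ideals_prime_to_relative_conductor
    (K : Type*) [Field K] [NumberField K]
    (hdeg : Module.finrank ℚ K = 2) (himag : IsEmpty (K →+* ℝ))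
    (O O' : Subring K) (hO : IsQuadraticOrder K O) (hO' : IsQuadraticOrder K O')
    (h : O ≤ O')
    (r : ℕ) (hr : AddSubgroup.relIndex O.toAddSubgroup O'.toAddSubgroup = r)
    (𝔞' 𝔟' : Ideal O') (h𝔞' : IsProperIdeal O' 𝔞') (h𝔟' : IsProperIdeal O' 𝔟')
    (hprimea : 𝔞' ⊔ Ideal.span {(r : O')} = ⊤)
    (hprimeb : 𝔟' ⊔ Ideal.span {(r : O')} = ⊤) :
    Ideal.comap (Subring.inclusion h) (𝔞' * 𝔟') =
      Ideal.comap (Subring.inclusion h) 𝔞' * Ideal.comap (Subring.inclusion h) 𝔟' :=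
  contraction_multiplicative_on_ideals_prime_to_relative_conductor_general K O O' h r hr 𝔞' 𝔟'
    hprimea hprimeb
end

section
/- Let O and O' be orders in an imaginary quadratic field K with O ⊆ O'. The homomorphism C(O) → C(O') from the ideal class group of O to the ideal class group of O' induced by 𝔞 ↦ 𝔞O' (extension of fractional ideals) is surjective; that is, for every class c' ∈ C(O') there exists a proper O-ideal 𝔞 with [𝔞O'] = c'. -/
/-- Two (invertible) ideals of an order are in the same class of the ideal class
group `C(O)` iff they agree up to nonzero principal multiples:
`[𝔞] = [𝔟]` in `C(O)` iff `(α)𝔞 = (β)𝔟` for some nonzero `α, β ∈ O`. -/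
def SameIdealClass {K : Type*} [Field K] (O : Subring K) (𝔞 𝔟 : Ideal O) : Prop :=
  ∃ α β : O, α ≠ 0 ∧ β ≠ 0 ∧
    Ideal.span {α} * 𝔞 = Ideal.span {β} * 𝔟

open Module

theorem Nat.prime_dvd_prod_primes_iff {s : Finset ℕ} (hs : ∀ q ∈ s, q.Prime) {p : ℕ}
    (hp : p.Prime) : p ∣ ∏ q ∈ s, q ↔ p ∈ s := by
  conv_rhs => rw [← Nat.primeFactors_prod hs]
  rw [Nat.mem_primeFactors_of_ne_zero (Finset.prod_ne_zero_iff.2 fun q hq => (hs q hq).ne_zero)]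
  exact (and_iff_right hp).symm

theorem exists_isCoprime_quadratic_form_value {a b c f : ℤ}
    (hprim : ∀ d, d ∣ a → d ∣ b → d ∣ c → IsUnit d) (hf : f ≠ 0) :
    ∃ x y : ℤ, 0 < x ∧ IsCoprime (a * x ^ 2 + b * x * y + c * y ^ 2) f := by
  set P := f.natAbs.primeFactors
  have hPf : ∀ (S : ℕ → Prop) [DecidablePred S], ∀ q ∈ P.filter S, q.Prime :=
    fun _ _ _ hq => Nat.prime_of_mem_primeFactors (Finset.mem_of_mem_filter _ hq)
  -- Modulo a prime `p ∣ f`, the form reduces to `a x²` if `p ∤ a`, to `c y²` if `p ∣ a`, `p ∤ c`,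
  -- and to `b x y` with `p ∤ b` if `p` divides `a` and `c`.
  set x : ℕ := ∏ p ∈ P.filter (fun p : ℕ => (p : ℤ) ∣ a ∧ ¬ (p : ℤ) ∣ c), p
  set y : ℕ := ∏ p ∈ P.filter (fun p : ℕ => ¬ (p : ℤ) ∣ a), p
  refine ⟨x, y, Nat.cast_pos.2 (Finset.prod_pos fun p hp => (hPf _ p hp).pos), ?_⟩
  rw [Int.isCoprime_iff_gcd_eq_one]
  refine Nat.coprime_of_dvd fun p hp hpQ hpf => ?_
  have hpP : p ∈ P := Nat.mem_primeFactors.2 ⟨hp, hpf, Int.natAbs_ne_zero.2 hf⟩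
  have := Fact.mk hp
  rw [← Int.natCast_dvd, ← ZMod.intCast_zmod_eq_zero_iff_dvd] at hpQ
  have hx : (x : ZMod p) = 0 ↔ (a : ZMod p) = 0 ∧ (c : ZMod p) ≠ 0 := by
    rw [ZMod.natCast_eq_zero_iff, Nat.prime_dvd_prod_primes_iff (hPf _) hp]
    simp [hpP, ZMod.intCast_zmod_eq_zero_iff_dvd]
  have hy : (y : ZMod p) = 0 ↔ (a : ZMod p) ≠ 0 := by
    rw [ZMod.natCast_eq_zero_iff, Nat.prime_dvd_prod_primes_iff (hPf _) hp]
    simp [hpP, ZMod.intCast_zmod_eq_zero_iff_dvd]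
  have hb : (a : ZMod p) = 0 → (c : ZMod p) = 0 → (b : ZMod p) ≠ 0 := by
    intro ha hc hb
    rw [ZMod.intCast_zmod_eq_zero_iff_dvd] at ha hb hc
    exact hp.ne_one (by simpa using Int.isUnit_iff_natAbs_eq.1 (hprim _ ha hb hc))
  push_cast at hpQ
  by_cases ha : (a : ZMod p) = 0 <;> by_cases hc : (c : ZMod p) = 0 <;> simp_all

theorem LinearIndependent.intCast_ne_zero {R : Type*} [Ring R] {α β : R}
    (h : LinearIndependent ℤ ![α, β]) {n : ℤ} (hn : n ≠ 0) : (n : R) ≠ 0 := fun h0 =>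
  hn (LinearIndependent.pair_iff.1 h n 0 (by simp [zsmul_eq_mul, h0])).1

section RankTwo

variable {R : Type*} [CommRing R] [IsDomain R]

theorem exists_primitive_relation_of_finrank_le_two [Module.Finite ℤ R] (hR : finrank ℤ R ≤ 2)
    {α β : R} (hαβ : LinearIndependent ℤ ![α, β]) :
    ∃ a b c : ℤ, a ≠ 0 ∧ (∀ d, d ∣ a → d ∣ b → d ∣ c → IsUnit d) ∧
      a • α ^ 2 + b • (α * β) + c • β ^ 2 = 0 := by
  have hdep : ¬ LinearIndependent ℤ ![α ^ 2, α * β, β ^ 2] := fun h => by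
    have := h.fintype_card_le_finrank
    simp only [Fintype.card_fin] at this
    omega
  obtain ⟨g, hg, i, hi⟩ := Fintype.not_linearIndependent_iff.1 hdep
  obtain ⟨g', hgg', hg'⟩ := Finset.univ.extract_gcd g Finset.univ_nonempty
  set G := Finset.univ.gcd g
  have hG : G ≠ 0 := fun h => hi (Finset.gcd_eq_zero_iff.1 h i (Finset.mem_univ i))
  have hrel : g' 0 • α ^ 2 + g' 1 • (α * β) + g' 2 • β ^ 2 = 0 := by
    refine (mul_eq_zero.1 ?_).resolve_left (hαβ.intCast_ne_zero hG)
    simp only [Fin.sum_univ_three, Matrix.cons_val_zero, Matrix.cons_val_one,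
      Matrix.cons_val_two, Matrix.tail_cons, Matrix.head_cons] at hg
    rw [hgg' 0 (Finset.mem_univ _), hgg' 1 (Finset.mem_univ _), hgg' 2 (Finset.mem_univ _)] at hg
    simp only [zsmul_eq_mul, Int.cast_mul] at hg ⊢
    linear_combination hg
  have hβ : β ≠ 0 := hαβ.ne_zero 1
  refine ⟨g' 0, g' 1, g' 2, fun ha => ?_, fun d ha hb hc => ?_, hrel⟩
  · have hbc : g' 1 • α + g' 2 • β = 0 := by
      refine (mul_eq_zero.1 ?_).resolve_left hβ
      rw [ha, zero_smul, zero_add] at hrel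
      simp only [zsmul_eq_mul] at hrel ⊢
      linear_combination hrel
    obtain ⟨hb, hc⟩ := LinearIndependent.pair_iff.1 hαβ _ _ hbc
    rw [Finset.gcd_eq_zero_iff.2 fun j _ => by fin_cases j <;> assumption] at hg'
    exact zero_ne_one hg'
  · refine isUnit_of_dvd_one (hg' ▸ Finset.dvd_gcd fun j _ => ?_)
    fin_cases j <;> assumption

theorem Ideal.exists_linearIndependent_pair_span_eq [Module.Free ℤ R] [Module.Finite ℤ R]
    (hR : finrank ℤ R = 2) {I : Ideal R} (hI : I ≠ ⊥) :
    ∃ α β : R, LinearIndependent ℤ ![α, β] ∧ I = Ideal.span {α, β} := by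
  let c := Ideal.selfBasis (Module.finBasisOfFinrankEq ℤ R hR) I hI
  refine ⟨c 0, c 1, ?_, le_antisymm (fun t ht => ?_) ?_⟩
  · refine LinearIndependent.pair_iff.2 fun s t hst => ?_
    have h := Fintype.linearIndependent_iff.1 c.linearIndependent ![s, t]
      (Subtype.ext (by simpa [Fin.sum_univ_two] using hst))
    exact ⟨h 0, h 1⟩
  · have h := congrArg Subtype.val (c.sum_repr ⟨t, ht⟩)
    simp only [Fin.sum_univ_two, Submodule.coe_add, Submodule.coe_smul_of_tower] at h
    rw [← h]
    exact add_mem (zsmul_mem (Ideal.subset_span (by simp)) _)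
      (zsmul_mem (Ideal.subset_span (by simp)) _)
  · rw [Ideal.span_le]
    rintro _ (rfl | rfl) <;> simp

theorem exists_mul_eq_mul_of_quadratic_relation {α β ω : R} {a b c : ℤ}
    (hαβ : LinearIndependent ℤ ![α, β]) (ha : a ≠ 0)
    (hrel : a • α ^ 2 + b • (α * β) + c • β ^ 2 = 0) (hω : a • α = ω * β) {x : ℤ} (hx : x ≠ 0)
    (y : ℤ) :
    ∃ δ ε : R, δ ≠ 0 ∧ δ * α = ε * β ∧ x * δ - y * ε = a * x ^ 2 + b * x * y + c * y ^ 2 := by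
  have hβ : β ≠ 0 := hαβ.ne_zero 1
  simp only [zsmul_eq_mul] at hrel hω
  have hquad : ω ^ 2 + b * ω + a * c = 0 := by
    refine (mul_eq_zero.1 (?_ : β ^ 2 * _ = 0)).resolve_left (pow_ne_zero 2 hβ)
    linear_combination a * hrel - (ω * β + a * α + b * β) * hω
  -- `δ = a(x - yτ')` and `ε = δτ`, where `τ = α / β` has conjugate `τ'` and `ω = aτ`
  refine ⟨a * x + b * y + y * ω, x * ω - c * y, fun h0 => ?_, ?_, by ring⟩
  · have : (y * a) • α + (a * x + b * y) • β = 0 := by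
      simp only [zsmul_eq_mul]
      push_cast
      linear_combination β * h0 + y * hω
    obtain ⟨hya, haxby⟩ := LinearIndependent.pair_iff.1 hαβ _ _ this
    obtain rfl : y = 0 := (mul_eq_zero.1 hya).resolve_right ha
    simp [ha, hx] at haxby
  · refine sub_eq_zero.1 ((mul_eq_zero.1 (?_ : (a : R) * (_ - _) = 0)).resolve_left
      (hαβ.intCast_ne_zero ha))
    linear_combination (a * x + b * y + y * ω) * hω + (y * β) * hquad

end RankTwo

theorem Ideal.span_singleton_mul_colon_of_le {R : Type*} [CommRing R] {I : Ideal R} {x : R}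
    (h : I ≤ Ideal.span {x}) : Ideal.span {x} * I.colon (Ideal.span {x}) = I := by
  refine le_antisymm (Ideal.span_singleton_mul_le_iff.2 fun z hz => ?_) fun z hz => ?_
  · rw [mul_comm]
    exact Ideal.mem_colon_span_singleton.1 hz
  · obtain ⟨w, rfl⟩ := Ideal.mem_span_singleton'.1 (h hz)
    exact Ideal.mem_span_singleton_mul.2 ⟨w, Ideal.mem_colon_span_singleton.2 hz, mul_comm _ _⟩

theorem Submodule.exists_smul_mem_of_finrank_eq {R M : Type*} [CommRing R] [IsDomain R]
    [AddCommGroup M] [Module R M] [Module.Finite R M] (N : Submodule R M)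
    (h : finrank R N = finrank R M) : ∃ r : R, r ≠ 0 ∧ ∀ x, r • x ∈ N := by
  have htors : Module.IsTorsion R (M ⧸ N) :=
    Module.finrank_eq_zero_iff_isTorsion.1 (by have := N.finrank_quotient_add_finrank; omega)
  obtain ⟨r, hr, hr0⟩ := Submodule.annihilator_top_inter_nonZeroDivisors htors
  refine ⟨r, nonZeroDivisors.ne_zero hr0, fun x => (Submodule.Quotient.mk_eq_zero N).1 ?_⟩
  rw [Submodule.Quotient.mk_smul]
  exact Submodule.mem_annihilator.1 hr _ Submodule.mem_top

section Orders

variable {K : Type*} [Field K]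

theorem Subring.exists_int_mul_mem_of_le {O O' : Subring K} (h : O ≤ O') [Module.Finite ℤ O']
    (hrank : finrank ℤ O = finrank ℤ O') : ∃ f : ℤ, f ≠ 0 ∧ ∀ z ∈ O', (f : K) * z ∈ O := by
  let ι : O →ₗ[ℤ] O' := (Subring.inclusion h).toIntAlgHom.toLinearMap
  obtain ⟨f, hf, hfO⟩ := (LinearMap.range ι).exists_smul_mem_of_finrank_eq
    ((LinearMap.finrank_range_of_inj (Subring.inclusion_injective h)).trans hrank)
  refine ⟨f, hf, fun z hz => ?_⟩
  obtain ⟨w, hw⟩ := hfO ⟨z, hz⟩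
  have hw' : (w : K) = f • z := congrArg Subtype.val hw
  rw [← zsmul_eq_mul, ← hw']
  exact w.2

namespace Ideal

variable {O : Subring K}

def multipliers (𝔞 : Ideal O) : Set K := {μ | ∀ a ∈ 𝔞, ∃ c ∈ 𝔞, μ * (a : K) = c}

theorem mem_multipliers_of_mem (𝔞 : Ideal O) {μ : K} (hμ : μ ∈ O) : μ ∈ 𝔞.multipliers :=
  fun a ha => ⟨⟨μ, hμ⟩ * a, 𝔞.mul_mem_left _ ha, rfl⟩

theorem multipliers_subset_multipliers_map {O' : Subring K} (h : O ≤ O') (𝔞 : Ideal O) :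
    𝔞.multipliers ⊆ (𝔞.map (Subring.inclusion h)).multipliers := by
  intro μ hμ z hz
  induction hz using Submodule.span_induction with
  | mem z hz =>
    obtain ⟨a, ha, rfl⟩ := hz
    obtain ⟨c, hc, hac⟩ := hμ a ha
    exact ⟨Subring.inclusion h c, mem_map_of_mem _ hc, hac⟩
  | zero => exact ⟨0, zero_mem _, mul_zero μ⟩
  | add z₁ z₂ _ _ h₁ h₂ =>
    obtain ⟨c₁, hc₁, e₁⟩ := h₁
    obtain ⟨c₂, hc₂, e₂⟩ := h₂
    exact ⟨c₁ + c₂, add_mem hc₁ hc₂, by push_cast; rw [mul_add, e₁, e₂]⟩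
  | smul r z _ hz =>
    obtain ⟨c, hc, e⟩ := hz
    exact ⟨r * c, mul_mem_left _ r hc, by push_cast [smul_eq_mul]; rw [mul_left_comm, e]⟩

end Ideal

theorem isProperIdeal_iff {O : Subring K} {𝔞 : Ideal O} :
    IsProperIdeal O 𝔞 ↔ 𝔞 ≠ ⊥ ∧ 𝔞.multipliers ⊆ O :=
  and_congr_right fun _ =>
    ⟨fun h _ hμ => (h _).1 hμ, fun h _ => ⟨fun hμ => h hμ, 𝔞.mem_multipliers_of_mem⟩⟩

namespace SameIdealClass

variable {O : Subring K} {𝔞 𝔟 : Ideal O}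

theorem multipliers_subset (h : SameIdealClass O 𝔞 𝔟) : 𝔞.multipliers ⊆ 𝔟.multipliers := by
  obtain ⟨α, β, -, hβ, he⟩ := h
  intro μ hμ b hb
  obtain ⟨a, ha, hab⟩ := Ideal.mem_span_singleton_mul.1
    (he ▸ Ideal.mem_span_singleton_mul.2 ⟨b, hb, rfl⟩ : β * b ∈ Ideal.span {α} * 𝔞)
  obtain ⟨a', ha', hμa⟩ := hμ a ha
  obtain ⟨b', hb', hab'⟩ := Ideal.mem_span_singleton_mul.1
    (he ▸ Ideal.mem_span_singleton_mul.2 ⟨a', ha', rfl⟩ : α * a' ∈ Ideal.span {β} * 𝔟)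
  refine ⟨b', hb', mul_left_cancel₀ (fun h0 => hβ (Subtype.ext h0) : (β : K) ≠ 0) ?_⟩
  have e₁ := congrArg Subtype.val hab
  have e₂ := congrArg Subtype.val hab'
  push_cast at e₁ e₂
  linear_combination -μ * e₁ + (α : K) * hμa - e₂

theorem isProperIdeal (h : SameIdealClass O 𝔞 𝔟) (h𝔟 : IsProperIdeal O 𝔟) :
    IsProperIdeal O 𝔞 := by
  rw [isProperIdeal_iff] at h𝔟 ⊢
  refine ⟨fun h𝔞 => ?_, h.multipliers_subset.trans h𝔟.2⟩
  obtain ⟨α, β, -, hβ, he⟩ := h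
  rw [h𝔞, Ideal.mul_bot, eq_comm, Ideal.mul_eq_bot, Ideal.span_singleton_eq_bot] at he
  exact he.elim hβ h𝔟.1

end SameIdealClass

section Contraction

variable {O O' : Subring K} (h : O ≤ O') {𝔠 : Ideal O'} {f Q : ℤ}

theorem map_comap_inclusion_eq (hf : ∀ z ∈ O', (f : K) * z ∈ O) (hQ : (Q : O') ∈ 𝔠)
    (hQf : IsCoprime Q f) : (𝔠.comap (Subring.inclusion h)).map (Subring.inclusion h) = 𝔠 := by
  refine le_antisymm Ideal.map_comap_le fun z hz => ?_
  obtain ⟨u, v, huv⟩ := hQf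
  have huv' : (u : O') * Q + v * f = 1 := by simpa using congrArg (Int.cast : ℤ → O') huv
  have hQ' : (Q : O') ∈ (𝔠.comap (Subring.inclusion h)).map (Subring.inclusion h) := by
    simpa using Ideal.mem_map_of_mem (Subring.inclusion h)
      (show (Q : O) ∈ 𝔠.comap (Subring.inclusion h) by simpa using hQ)
  have hfz : (f : O') * z ∈ (𝔠.comap (Subring.inclusion h)).map (Subring.inclusion h) := by
    have e : Subring.inclusion h ⟨f * z, hf z z.2⟩ = f * z := Subtype.ext (by simp)
    rw [← e]
    exact Ideal.mem_map_of_mem _ (by rw [Ideal.mem_comap, e]; exact 𝔠.mul_mem_left _ hz)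
  have hz : z = (u * z) * Q + v * (f * z) := by
    linear_combination (-z) * huv'
  rw [hz]
  exact add_mem (Ideal.mul_mem_left _ _ hQ') (Ideal.mul_mem_left _ _ hfz)

theorem isProperIdeal_comap_inclusion (h𝔠 : IsProperIdeal O' 𝔠)
    (hf : ∀ z ∈ O', (f : K) * z ∈ O) (hQ : (Q : O') ∈ 𝔠) (hQf : IsCoprime Q f) :
    IsProperIdeal O (𝔠.comap (Subring.inclusion h)) := by
  have hmap := map_comap_inclusion_eq h hf hQ hQf
  rw [isProperIdeal_iff] at h𝔠 ⊢
  refine ⟨fun h0 => h𝔠.1 (by rw [← hmap, h0, Ideal.map_bot]), fun μ hμ => ?_⟩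
  have hμO' : μ ∈ O' := h𝔠.2 (hmap ▸ Ideal.multipliers_subset_multipliers_map h _ hμ)
  obtain ⟨c, -, hc⟩ := hμ (Q : O) (by simpa using hQ)
  push_cast at hc
  obtain ⟨u, v, huv⟩ := hQf
  have huv' : (u : K) * Q + v * f = 1 := by simpa using congrArg (Int.cast : ℤ → K) huv
  have hμ : μ = u * (μ * Q) + v * (f * μ) := by linear_combination (-μ) * huv'
  rw [hμ, hc]
  exact add_mem (mul_mem (intCast_mem O u) c.2) (mul_mem (intCast_mem O v) (hf μ hμO'))

end Contraction

theorem exists_smul_eq_mul_of_isProperIdeal_span_pair {O : Subring K} {α β : O} (hβ : β ≠ 0)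
    (h : IsProperIdeal O (Ideal.span {α, β})) {a b c : ℤ}
    (hrel : a • α ^ 2 + b • (α * β) + c • β ^ 2 = 0) : ∃ ω : O, a • α = ω * β := by
  have hβK : (β : K) ≠ 0 := fun h0 => hβ (Subtype.ext h0)
  have hrelK : (a : K) * α ^ 2 + b * (α * β) + c * β ^ 2 = 0 := by
    simpa [zsmul_eq_mul] using congrArg Subtype.val hrel
  have hα : α ∈ Ideal.span {α, β} := Ideal.subset_span (by simp)
  have hβ' : β ∈ Ideal.span {α, β} := Ideal.subset_span (by simp)
  set ω : K := a * α / β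
  have hωβ : ω * β = a * α := div_mul_cancel₀ _ hβK
  have hωα : ω * α = -b * α - c * β := by
    refine mul_right_cancel₀ hβK ?_
    linear_combination α * hωβ + hrelK
  have hω : ω ∈ O := (isProperIdeal_iff.1 h).2 fun t ht => by
    obtain ⟨r, s, rfl⟩ := Ideal.mem_span_pair.1 ht
    refine ⟨r * (-(b • α) - c • β) + s * (a • α), add_mem
      (Ideal.mul_mem_left _ r (sub_mem (neg_mem (zsmul_mem hα b)) (zsmul_mem hβ' c)))
      (Ideal.mul_mem_left _ s (zsmul_mem hα a)), ?_⟩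
    push_cast [zsmul_eq_mul]
    linear_combination r * hωα + s * hωβ
  exact ⟨⟨_, hω⟩, Subtype.ext (by push_cast [zsmul_eq_mul]; exact hωβ.symm)⟩

theorem exists_sameIdealClass_intCast_mem_isCoprime {O : Subring K} [Module.Free ℤ O]
    [Module.Finite ℤ O] (hO : finrank ℤ O = 2) {𝔟 : Ideal O} (h𝔟 : IsProperIdeal O 𝔟) {f : ℤ}
    (hf : f ≠ 0) : ∃ 𝔠 : Ideal O, SameIdealClass O 𝔠 𝔟 ∧ ∃ Q : ℤ, IsCoprime Q f ∧ (Q : O) ∈ 𝔠 := by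
  obtain ⟨α, β, hαβ, rfl⟩ := Ideal.exists_linearIndependent_pair_span_eq hO h𝔟.1
  obtain ⟨a, b, c, ha, hprim, hrel⟩ := exists_primitive_relation_of_finrank_le_two hO.le hαβ
  have hβ : β ≠ 0 := hαβ.ne_zero 1
  obtain ⟨ω, hω⟩ := exists_smul_eq_mul_of_isProperIdeal_span_pair hβ h𝔟 hrel
  obtain ⟨x, y, hx, hQf⟩ := exists_isCoprime_quadratic_form_value hprim hf
  obtain ⟨δ, ε, hδ, hδα, hQ⟩ := exists_mul_eq_mul_of_quadratic_relation hαβ ha hrel hω hx.ne' y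
  refine ⟨(Ideal.span {δ} * Ideal.span {α, β}).colon (Ideal.span {β}),
    ⟨β, δ, hβ, hδ, Ideal.span_singleton_mul_colon_of_le ?_⟩, _, hQf, ?_⟩
  · rw [Ideal.span_singleton_mul_le_iff]
    intro t ht
    obtain ⟨r, s, rfl⟩ := Ideal.mem_span_pair.1 ht
    exact Ideal.mem_span_singleton'.2 ⟨r * ε + s * δ, by linear_combination -r * hδα⟩
  · rw [Ideal.mem_colon_span_singleton, Ideal.mem_span_singleton_mul]
    refine ⟨x * β - y * α, Ideal.mem_span_pair.2 ⟨-y, x, by ring⟩, ?_⟩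
    push_cast
    linear_combination (-y) * hδα + β * hQ

end Orders

/-- Every class of `C(O')` contains a proper integral `O'`-ideal, so this is the surjectivity of
`C(O) → C(O')`, `[𝔞] ↦ [𝔞O']`. -/
theorem classGroup_extension_surjective_general
    (K : Type*) [Field K]
    (O O' : Subring K) (hO : IsQuadraticOrder K O) (hO' : IsQuadraticOrder K O')
    (h : O ≤ O')
    (𝔟' : Ideal O') (h𝔟' : IsProperIdeal O' 𝔟') :
    ∃ 𝔞 : Ideal O, IsProperIdeal O 𝔞 ∧
      SameIdealClass O' (Ideal.map (Subring.inclusion h) 𝔞) 𝔟' := by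
  obtain ⟨-, hrankO⟩ := hO
  obtain ⟨_, hrankO'⟩ := hO'
  have : Module.Finite ℤ O' := Module.finite_of_finrank_pos (by omega)
  obtain ⟨f, hf0, hf⟩ := Subring.exists_int_mul_mem_of_le h (hrankO.trans hrankO'.symm)
  obtain ⟨𝔠, h𝔠, Q, hQf, hQ⟩ := exists_sameIdealClass_intCast_mem_isCoprime hrankO' h𝔟' hf0
  refine ⟨𝔠.comap (Subring.inclusion h),
    isProperIdeal_comap_inclusion h (h𝔠.isProperIdeal h𝔟') hf hQ hQf, ?_⟩
  rwa [map_comap_inclusion_eq h hf hQ hQf]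

/-- Surjectivity of `C(O) → C(O')`, `[𝔞] ↦ [𝔞O']`: since every class of `C(O')`
contains a proper (integral) `O'`-ideal, it is stated as: for every proper
`O'`-ideal `𝔟'` there is a proper `O`-ideal `𝔞` with `[𝔞O'] = [𝔟']` in `C(O')`. -/
theorem classGroup_extension_surjective
    (K : Type*) [Field K] [NumberField K]
    (hdeg : Module.finrank ℚ K = 2) (himag : IsEmpty (K →+* ℝ))
    (O O' : Subring K) (hO : IsQuadraticOrder K O) (hO' : IsQuadraticOrder K O')
    (h : O ≤ O')
    (𝔟' : Ideal O') (h𝔟' : IsProperIdeal O' 𝔟') :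
    ∃ 𝔞 : Ideal O, IsProperIdeal O 𝔞 ∧
      SameIdealClass O' (Ideal.map (Subring.inclusion h) 𝔞) 𝔟' :=
  classGroup_extension_surjective_general K O O' hO hO' h 𝔟' h𝔟'
end

section
/- Let l be a prime, λ > 0 an integer, and let D and D' be negative integers with D ≡ 0 or 1 (mod 4), D' ≡ 0 or 1 (mod 4), and D = l^{2λ}·D'. Let f(x,y) = ax^2 + bxy + cy^2 be a primitive positive definite integral binary quadratic form of discriminant D (i.e., a, b, c ∈ ℤ with gcd(a,b,c) = 1, a > 0, and b^2 − 4ac = D). Then for every odd integer h with 1 ≤ h < 2λ+1, there are no integers x, y with f(x,y) = l^h. -/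
/-!
A common factor of `x` and `y` is a power of `l`, and dividing it out lowers the exponent by an
even amount, so it suffices to rule out `f(x, y) = l ^ k` with `x, y` coprime, `k` odd and
`k < 2λ`. Completing `(x, y)` to a matrix of `SL₂(ℤ)` turns `f` into an equivalent form
`l ^ k X² + B X Y + C Y²` of discriminant `l ^ (2λ) D'`. Then `l ^ k ∣ B²` forces
`l ^ ((k + 1) / 2) ∣ B`, after which the discriminant equation gives `l ∣ 4 C`; for `l = 2` the
congruence `D' ≡ 0, 1 (mod 4)` upgrades this to `2 ∣ C`. So `l` divides all coefficients of a
form equivalent to `f`, hence those of `f`, contradicting primitivity.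
-/

theorem Prime.pow_succ_dvd_of_pow_dvd_sq {M : Type*} [CommMonoidWithZero M] [IsCancelMulZero M]
    {p b : M} (hp : Prime p) {m : ℕ} (h : p ^ (2 * m + 1) ∣ b ^ 2) : p ^ (m + 1) ∣ b := by
  induction m generalizing b with
  | zero => simpa using hp.dvd_of_dvd_pow (by simpa using h)
  | succ m ih =>
    obtain ⟨b', rfl⟩ := hp.dvd_of_dvd_pow ((dvd_pow_self p (by omega)).trans h)
    rw [mul_pow, show 2 * (m + 1) + 1 = 2 + (2 * m + 1) by ring, pow_add] at h
    rw [pow_succ']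
    exact mul_dvd_mul_left p (ih ((mul_dvd_mul_iff_left (pow_ne_zero 2 hp.ne_zero)).mp h))

theorem Int.sq_emod_four (n : ℤ) : n ^ 2 % 4 = 0 ∨ n ^ 2 % 4 = 1 := by
  rcases Int.even_or_odd n with ⟨t, rfl⟩ | hn
  · exact Or.inl (Int.emod_eq_zero_of_dvd ⟨t ^ 2, by ring⟩)
  · exact Or.inr (Int.sq_mod_four_eq_one_of_odd hn)

theorem two_dvd_of_two_mul_eq_sq_sub_four_pow_mul {B C D' : ℤ} {e : ℕ}
    (hD' : D' % 4 = 0 ∨ D' % 4 = 1) (h : 2 * C = B ^ 2 - 4 ^ e * D') : 2 ∣ C := by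
  have hB := Int.sq_emod_four B
  generalize B ^ 2 = s at h hB
  cases e with
  | zero =>
    rw [pow_zero, one_mul] at h
    omega
  | succ e =>
    rw [pow_succ' 4 e, mul_assoc] at h
    generalize 4 ^ e * D' = t at h
    omega

theorem dvd_and_dvd_of_sq_sub_four_mul_eq {l k lam : ℕ} {B C D' : ℤ} (hl : l.Prime)
    (hk : Odd k) (hklam : k < 2 * lam) (hD' : D' % 4 = 0 ∨ D' % 4 = 1)
    (h : B ^ 2 - 4 * l ^ k * C = l ^ (2 * lam) * D') : (l : ℤ) ∣ B ∧ (l : ℤ) ∣ C := by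
  have hlZ : Prime (l : ℤ) := Nat.prime_iff_prime_int.mp hl
  obtain ⟨m, rfl⟩ := hk
  obtain ⟨e, rfl⟩ : ∃ e, lam = m + 1 + e := ⟨lam - (m + 1), by omega⟩
  obtain ⟨B₀, rfl⟩ : (l : ℤ) ^ (m + 1) ∣ B :=
    hlZ.pow_succ_dvd_of_pow_dvd_sq ⟨4 * C + l ^ (2 * e + 1) * D', by linear_combination h⟩
  have h4C : 4 * C = l * (B₀ ^ 2 - l ^ (2 * e) * D') :=
    mul_left_cancel₀ (pow_ne_zero (2 * m + 1) hlZ.ne_zero) (by linear_combination -h)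
  refine ⟨dvd_mul_of_dvd_left (dvd_pow_self _ m.succ_ne_zero) _, ?_⟩
  by_cases hl2 : l = 2
  · subst hl2
    refine two_dvd_of_two_mul_eq_sq_sub_four_pow_mul (B := B₀) (e := e) hD' ?_
    rw [pow_mul] at h4C
    push_cast at h4C
    exact mul_left_cancel₀ two_ne_zero (by linear_combination h4C)
  · have hl4 : ¬(l : ℤ) ∣ 4 := fun h4 ↦
      hl2 <| (Nat.prime_dvd_prime_iff_eq hl Nat.prime_two).mp <| by
        exact_mod_cast hlZ.dvd_of_dvd_pow (a := 2) (n := 2) (by norm_num [h4])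
    exact (hlZ.dvd_mul.mp ⟨_, h4C⟩).resolve_left hl4

def quadForm (a b c x y : ℤ) : ℤ := a * x ^ 2 + b * x * y + c * y ^ 2

/-- The middle coefficient of the transformed form: `quadForm a b c (x X + u Y) (y X + v Y)`
equals `quadForm a b c x y X² + quadFormPolar a b c x y u v X Y + quadForm a b c u v Y²`. -/
def quadFormPolar (a b c x y u v : ℤ) : ℤ := 2 * a * x * u + b * (x * v + y * u) + 2 * c * y * v

theorem quadForm_mul (a b c d x y : ℤ) :
    quadForm a b c (d * x) (d * y) = d ^ 2 * quadForm a b c x y := by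
  unfold quadForm; ring

section Transform

variable {a b c x y u v : ℤ}

theorem quadFormPolar_sq_sub_four_mul (hdet : x * v - y * u = 1) :
    quadFormPolar a b c x y u v ^ 2 - 4 * quadForm a b c x y * quadForm a b c u v
      = b ^ 2 - 4 * a * c := by
  unfold quadFormPolar quadForm
  linear_combination (b ^ 2 - 4 * a * c) * (x * v - y * u + 1) * hdet

theorem dvd_coeffs_of_dvd_transformed {d : ℤ} (hdet : x * v - y * u = 1)
    (hA : d ∣ quadForm a b c x y) (hB : d ∣ quadFormPolar a b c x y u v)
    (hC : d ∣ quadForm a b c u v) : d ∣ a ∧ d ∣ b ∧ d ∣ c := by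
  have hcomb (r s t : ℤ) :
      d ∣ quadForm a b c x y * r + quadFormPolar a b c x y u v * s + quadForm a b c u v * t :=
    ((hA.mul_right r).add (hB.mul_right s)).add (hC.mul_right t)
  unfold quadForm quadFormPolar at hcomb
  refine ⟨?_, ?_, ?_⟩
  · convert hcomb (v ^ 2) (-(v * y)) (y ^ 2) using 1
    linear_combination (-a * (x * v - y * u + 1)) * hdet
  · convert hcomb (-2 * u * v) (x * v + y * u) (-2 * x * y) using 1
    linear_combination (-b * (x * v - y * u + 1)) * hdet
  · convert hcomb (u ^ 2) (-(x * u)) (x ^ 2) using 1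
    linear_combination (-c * (x * v - y * u + 1)) * hdet

end Transform

section Representation

variable {a b c x y l : ℤ}

theorem isCoprime_of_quadForm_eq_pow (hl : Prime l) {k : ℕ} (h : quadForm a b c x y = l ^ k)
    (hxy : ¬(l ∣ x ∧ l ∣ y)) : IsCoprime x y := by
  refine isCoprime_of_prime_dvd ?_ fun p hp ⟨x', hx'⟩ ⟨y', hy'⟩ => hxy ?_
  · rintro ⟨rfl, rfl⟩
    exact pow_ne_zero k hl.ne_zero (by simpa [quadForm] using h.symm)
  · have hpl : p ∣ l ^ k :=
      ⟨p * quadForm a b c x' y', by rw [← h, hx', hy', quadForm_mul]; ring⟩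
    have hlp : l ∣ p := ((hp.dvd_prime_iff_associated hl).mp (hp.dvd_of_dvd_pow hpl)).symm.dvd
    exact ⟨hlp.trans ⟨x', hx'⟩, hlp.trans ⟨y', hy'⟩⟩

theorem exists_quadForm_eq_pow_of_quadForm_mul_eq_pow (hl : Prime l) {m : ℕ}
    (h : quadForm a b c (l * x) (l * y) = l ^ (2 * m + 1)) :
    ∃ m', m = m' + 1 ∧ quadForm a b c x y = l ^ (2 * m' + 1) := by
  rw [quadForm_mul] at h
  cases m with
  | zero =>
    have h1 : l * (l * quadForm a b c x y) = l * 1 := by linear_combination h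
    exact absurd ⟨_, (mul_left_cancel₀ hl.ne_zero h1).symm⟩ hl.not_dvd_one
  | succ m =>
    exact ⟨m, rfl, mul_left_cancel₀ (pow_ne_zero 2 hl.ne_zero) (by linear_combination h)⟩

theorem exists_isCoprime_quadForm_eq_pow (hl : Prime l) {m : ℕ}
    (h : quadForm a b c x y = l ^ (2 * m + 1)) :
    ∃ j ≤ m, ∃ x' y', IsCoprime x' y' ∧ quadForm a b c x' y' = l ^ (2 * j + 1) := by
  induction m using Nat.strong_induction_on generalizing x y with
  | _ m ih =>
  by_cases hxy : l ∣ x ∧ l ∣ y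
  · obtain ⟨⟨x', rfl⟩, y', rfl⟩ := hxy
    obtain ⟨m', rfl, h'⟩ := exists_quadForm_eq_pow_of_quadForm_mul_eq_pow hl h
    obtain ⟨j, hjm, hj⟩ := ih m' m'.lt_succ_self h'
    exact ⟨j, hjm.trans m'.le_succ, hj⟩
  · exact ⟨m, le_rfl, x, y, isCoprime_of_quadForm_eq_pow hl h hxy, h⟩

end Representation

theorem quadForm_ne_pow_of_isCoprime {l k lam : ℕ} {a b c x y D' : ℤ} (hl : l.Prime)
    (hprim : Int.gcd a (Int.gcd b c) = 1) (hD' : D' % 4 = 0 ∨ D' % 4 = 1)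
    (hdisc : b ^ 2 - 4 * a * c = l ^ (2 * lam) * D') (hk : Odd k) (hklam : k < 2 * lam)
    (hxy : IsCoprime x y) : quadForm a b c x y ≠ l ^ k := by
  intro hA
  obtain ⟨v, t, hvt⟩ := hxy
  have hdet : x * v - y * -t = 1 := by linear_combination hvt
  have hBC := quadFormPolar_sq_sub_four_mul (a := a) (b := b) (c := c) hdet
  rw [hA, hdisc] at hBC
  obtain ⟨hB, hC⟩ := dvd_and_dvd_of_sq_sub_four_mul_eq hl hk hklam hD' hBC
  obtain ⟨ha, hb, hc⟩ :=
    dvd_coeffs_of_dvd_transformed hdet (hA ▸ dvd_pow_self _ hk.pos.ne') hB hC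
  have h1 := Int.dvd_coe_gcd ha (Int.dvd_coe_gcd hb hc)
  rw [hprim, Nat.cast_one] at h1
  exact (Nat.prime_iff_prime_int.mp hl).not_dvd_one h1

theorem no_small_odd_prime_power_repr_general (l : ℕ) (hl : l.Prime) (lam : ℕ)
    (D D' : ℤ) (hD'4 : D' % 4 = 0 ∨ D' % 4 = 1)
    (hDD' : D = (l : ℤ) ^ (2 * lam) * D')
    (a b c : ℤ) (hprim : Int.gcd a (Int.gcd b c) = 1)
    (hdisc : b ^ 2 - 4 * a * c = D)
    (h : ℕ) (hodd : Odd h) (h2 : h < 2 * lam + 1) :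
    ¬∃ x y : ℤ, a * x ^ 2 + b * x * y + c * y ^ 2 = (l : ℤ) ^ h := by
  rintro ⟨x, y, hxy⟩
  obtain ⟨m, rfl⟩ := hodd
  obtain ⟨j, hjm, x', y', hcop, hrepr⟩ :=
    exists_isCoprime_quadForm_eq_pow (Nat.prime_iff_prime_int.mp hl) (a := a) (b := b) (c := c) hxy
  exact quadForm_ne_pow_of_isCoprime hl hprim hD'4 (hdisc.trans hDD') (odd_two_mul_add_one j)
    (by omega) hcop hrepr

theorem no_small_odd_prime_power_repr (l : ℕ) (hl : l.Prime) (lam : ℕ) (hlam : 0 < lam)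
    (D D' : ℤ) (hDneg : D < 0) (hD'neg : D' < 0)
    (hD4 : D % 4 = 0 ∨ D % 4 = 1) (hD'4 : D' % 4 = 0 ∨ D' % 4 = 1)
    (hDD' : D = (l : ℤ) ^ (2 * lam) * D')
    (a b c : ℤ) (hprim : Int.gcd a (Int.gcd b c) = 1) (ha : 0 < a)
    (hdisc : b ^ 2 - 4 * a * c = D)
    (h : ℕ) (hodd : Odd h) (h1 : 1 ≤ h) (h2 : h < 2 * lam + 1) :
    ¬∃ x y : ℤ, a * x ^ 2 + b * x * y + c * y ^ 2 = (l : ℤ) ^ h :=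
  no_small_odd_prime_power_repr_general l hl lam D D' hD'4 hDD' a b c hprim hdisc h hodd h2
end

section
/- For every positive integer m, the equation m = 2x^2 + 2xy + 3y^2 has a solution in integers x, y if and only if both of the following hold: (1) for every prime q with q ≡ 11, 13, 17, or 19 (mod 20), the q-adic valuation of m is even; and (2) the sum of the 2-adic valuation of m and the total number of prime factors of m (counted with multiplicity) congruent to 3 or 7 mod 20 is odd. -/
/-!
Since `2 (2x² + 2xy + 3y²) = (2x + y)² + 5y²`, `m` is represented by the form iff
`2m = a² + 5b²`. The `n > 0` of the form `a² + 5b²` are those whose exponents at the primes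
`≡ 11, 13, 17, 19 mod 20` are even and which have an even number of prime factors `2` or
`≡ 3, 7 mod 20`; this is proved by removing one prime factor `p` of `n` at a time. For
`p ≡ 11, 13, 17, 19 mod 20`, `-5` is a non-residue, so `p ∣ a² + 5b²` forces `p ∣ a, b`.
Otherwise `-5` is a residue and Thue's lemma gives `p = c² + 5d²` (if `p ≡ 1, 9`) or
`2p = c² + 5d²` (if `p ≡ 3, 7`); Euler's descent then shows that `p·t` has the form iff `t`,
respectively `2t`, has it. The factors `4` and `5` can be divided out directly.
-/

def IsSqAddFiveSq (n : ℕ) : Prop := ∃ a b : ℤ, (n : ℤ) = a ^ 2 + 5 * b ^ 2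

theorem even_and_even_of_four_dvd_sq_add_five_sq {a b : ℤ} (h : 4 ∣ a ^ 2 + 5 * b ^ 2) :
    Even a ∧ Even b := by
  have sq_mod : ∀ x : ℤ, (Even x ∧ x ^ 2 % 4 = 0) ∨ x ^ 2 % 4 = 1 := fun x =>
    (Int.even_or_odd x).imp
      (fun ⟨k, hk⟩ => ⟨⟨k, hk⟩, Int.emod_eq_zero_of_dvd ⟨k ^ 2, by rw [hk]; ring⟩⟩)
      Int.sq_mod_four_eq_one_of_odd
  rcases sq_mod a with ⟨ha, ha'⟩ | ha' <;> rcases sq_mod b with ⟨hb, hb'⟩ | hb'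
  · exact ⟨ha, hb⟩
  all_goals generalize a ^ 2 = A at *; generalize b ^ 2 = B at *; omega

theorem five_dvd_of_five_dvd_sq_add_five_sq {a b : ℤ} (h : 5 ∣ a ^ 2 + 5 * b ^ 2) : 5 ∣ a :=
  (Nat.prime_iff_prime_int.mp Nat.prime_five).dvd_of_dvd_pow
    ((dvd_add_left (dvd_mul_right 5 _)).mp h)

theorem ZMod.exists_intCast_eq_mul_natAbs_le_sqrt {n : ℕ} [NeZero n] (z : ZMod n) :
    ∃ a b : ℤ, (a ≠ 0 ∨ b ≠ 0) ∧ a.natAbs ≤ n.sqrt ∧ b.natAbs ≤ n.sqrt ∧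
      (a : ZMod n) = z * b := by
  set r := n.sqrt
  have hcard : Fintype.card (ZMod n) < Fintype.card (Fin (r + 1) × Fin (r + 1)) := by
    simpa [ZMod.card, ← sq] using Nat.lt_succ_sqrt' n
  obtain ⟨u, v, huv, heq⟩ := Fintype.exists_ne_map_eq_of_card_lt
    (fun x : Fin (r + 1) × Fin (r + 1) => ((x.1 : ℕ) : ZMod n) - z * ((x.2 : ℕ) : ZMod n))
    hcard
  refine ⟨(u.1 : ℕ) - (v.1 : ℕ), (u.2 : ℕ) - (v.2 : ℕ), ?_, by omega, by omega, ?_⟩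
  · contrapose! huv
    exact Prod.ext (Fin.ext (by omega)) (Fin.ext (by omega))
  · push_cast
    linear_combination heq

theorem dvd_and_dvd_of_dvd_sq_add_five_sq {p : ℕ} [Fact p.Prime]
    (hns : ¬IsSquare ((-5 : ℤ) : ZMod p)) {a b : ℤ} (h : (p : ℤ) ∣ a ^ 2 + 5 * b ^ 2) :
    (p : ℤ) ∣ a ∧ (p : ℤ) ∣ b := by
  simp only [← ZMod.intCast_zmod_eq_zero_iff_dvd] at h ⊢
  push_cast at h hns ⊢
  have hb : (b : ZMod p) = 0 := by
    by_contra hb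
    exact hns ⟨a / b, by field_simp; linear_combination -h⟩
  exact ⟨by simpa [hb] using h, hb⟩

theorem isSquare_neg_five_of_mod_twenty {p : ℕ} [Fact p.Prime]
    (h : p % 20 = 1 ∨ p % 20 = 3 ∨ p % 20 = 7 ∨ p % 20 = 9) :
    IsSquare ((-5 : ℤ) : ZMod p) := by
  apply ZMod.isSquare_of_jacobiSym_eq_one
  rw [jacobiSym.mod_right _ (Nat.odd_iff.mpr (by omega))]
  rcases h with h | h | h | h <;> norm_num [h]

theorem not_isSquare_neg_five_of_mod_twenty {p : ℕ} [Fact p.Prime]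
    (h : p % 20 = 11 ∨ p % 20 = 13 ∨ p % 20 = 17 ∨ p % 20 = 19) :
    ¬IsSquare ((-5 : ℤ) : ZMod p) := by
  rw [← ZMod.nonsquare_iff_jacobiSym_eq_neg_one,
    jacobiSym.mod_right _ (Nat.odd_iff.mpr (by omega))]
  rcases h with h | h | h | h <;> norm_num [h]

namespace IsSqAddFiveSq

theorem mul {m n : ℕ} (hm : IsSqAddFiveSq m) (hn : IsSqAddFiveSq n) :
    IsSqAddFiveSq (m * n) := by
  obtain ⟨a, b, ha⟩ := hm
  obtain ⟨c, d, hc⟩ := hn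
  exact ⟨a * c + 5 * b * d, a * d - b * c, by push_cast [ha, hc]; ring⟩

theorem mod_eight {n : ℕ} (h : IsSqAddFiveSq n) :
    n % 8 = 0 ∨ n % 8 = 1 ∨ n % 8 = 4 ∨ n % 8 = 5 ∨ n % 8 = 6 := by
  obtain ⟨a, b, hab⟩ := h
  have hval : ((a : ZMod 8) ^ 2 + 5 * (b : ZMod 8) ^ 2).val = n % 8 := by
    rw [← ZMod.val_natCast, ← Int.cast_natCast, hab]
    push_cast
    rfl
  rw [← hval]
  generalize (a : ZMod 8) = x
  generalize (b : ZMod 8) = y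
  revert x y
  decide

theorem not_two : ¬IsSqAddFiveSq 2 := fun h => by
  have := h.mod_eight
  omega

theorem four_mul_iff {n : ℕ} : IsSqAddFiveSq (4 * n) ↔ IsSqAddFiveSq n := by
  refine ⟨fun ⟨a, b, h⟩ => ?_, mul ⟨2, 0, by norm_num⟩⟩
  push_cast at h
  obtain ⟨⟨c, rfl⟩, ⟨d, rfl⟩⟩ :=
    even_and_even_of_four_dvd_sq_add_five_sq ⟨n, h.symm⟩
  exact ⟨c, d, by linarith⟩

theorem five_mul_iff {n : ℕ} : IsSqAddFiveSq (5 * n) ↔ IsSqAddFiveSq n := by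
  refine ⟨fun ⟨a, b, h⟩ => ?_, mul ⟨0, 1, by norm_num⟩⟩
  push_cast at h
  obtain ⟨c, rfl⟩ := five_dvd_of_five_dvd_sq_add_five_sq ⟨n, h.symm⟩
  exact ⟨b, c, by linarith⟩

theorem of_prime_mul {p m k : ℕ} (hp : p.Prime) (hpm : IsSqAddFiveSq (p * m))
    (hkp : IsSqAddFiveSq (k * p)) : IsSqAddFiveSq (k * m) := by
  obtain ⟨a, b, h1⟩ := hpm
  obtain ⟨c, d, h2⟩ := hkp
  push_cast at h1 h2
  have hpZ : Prime (p : ℤ) := Nat.prime_iff_prime_int.mp hp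
  -- `p` divides `(ad - bc)(ad + bc) = d²·pm - b²·kp`, so up to `d ↦ -d` it divides `ad - bc`;
  -- then `(ac + 5bd)² + 5(ad - bc)² = p²km` makes it divide `ac + 5bd` too.
  suffices key : ∀ d : ℤ, (k : ℤ) * p = c ^ 2 + 5 * d ^ 2 → (p : ℤ) ∣ a * d - b * c →
      IsSqAddFiveSq (k * m) by
    have hdvd : (p : ℤ) ∣ (a * d - b * c) * (a * d + b * c) :=
      ⟨d ^ 2 * m - b ^ 2 * k, by linear_combination -d ^ 2 * h1 + b ^ 2 * h2⟩
    rcases hpZ.dvd_or_dvd hdvd with h | h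
    · exact key d h2 h
    · refine key (-d) (by linear_combination h2) ?_
      rw [show a * -d - b * c = -(a * d + b * c) by ring]
      exact h.neg_right
  rintro d h2 ⟨v, hv⟩
  have hsq : (p : ℤ) ∣ (a * c + 5 * b * d) ^ 2 :=
    ⟨p * (k * m - 5 * v ^ 2), by
      linear_combination
        -(c ^ 2 + 5 * d ^ 2) * h1 - p * m * h2 - 5 * (a * d - b * c + p * v) * hv⟩
  obtain ⟨u, hu⟩ := hpZ.dvd_of_dvd_pow hsq
  refine ⟨u, v, mul_left_cancel₀ (pow_ne_zero 2 hpZ.ne_zero) ?_⟩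
  push_cast
  linear_combination (c ^ 2 + 5 * d ^ 2) * h1 + p * m * h2 + (a * c + 5 * b * d + p * u) * hu
    + 5 * (a * d - b * c + p * v) * hv

theorem prime_mul_iff {p t : ℕ} (hp : p.Prime) (hS : IsSqAddFiveSq p) :
    IsSqAddFiveSq (p * t) ↔ IsSqAddFiveSq t :=
  ⟨fun h => by simpa using of_prime_mul (k := 1) hp h (by simpa using hS), hS.mul⟩

theorem prime_mul_iff_two_mul {p t : ℕ} (hp : p.Prime) (hS : IsSqAddFiveSq (2 * p)) :
    IsSqAddFiveSq (p * t) ↔ IsSqAddFiveSq (2 * t) :=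
  ⟨fun h => of_prime_mul hp h hS, fun h => four_mul_iff.mp <| by
    rw [show 4 * (p * t) = 2 * p * (2 * t) by ring]
    exact hS.mul h⟩

theorem prime_mul_iff_of_not_isSquare {p m : ℕ} [Fact p.Prime]
    (hns : ¬IsSquare ((-5 : ℤ) : ZMod p)) :
    IsSqAddFiveSq (p * m) ↔ ∃ s, m = p * s ∧ IsSqAddFiveSq s := by
  refine ⟨fun ⟨a, b, hab⟩ => ?_, fun ⟨s, hs, hS⟩ => ?_⟩
  · push_cast at hab
    obtain ⟨⟨c, rfl⟩, ⟨d, rfl⟩⟩ :=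
      dvd_and_dvd_of_dvd_sq_add_five_sq hns ⟨m, hab.symm⟩
    have hp0 : (p : ℤ) ≠ 0 := by exact_mod_cast (Fact.out : p.Prime).ne_zero
    have hm : (m : ℤ) = p * (c ^ 2 + 5 * d ^ 2) :=
      mul_left_cancel₀ hp0 (by linear_combination hab)
    obtain ⟨s, hs⟩ : ∃ s : ℕ, (s : ℤ) = c ^ 2 + 5 * d ^ 2 :=
      ⟨(c ^ 2 + 5 * d ^ 2).toNat, Int.toNat_of_nonneg (by positivity)⟩
    exact ⟨s, by rw [← hs] at hm; exact_mod_cast hm, c, d, hs⟩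
  · rw [hs, ← mul_assoc]
    exact mul ⟨p, 0, by push_cast; ring⟩ hS

theorem of_isSquare_neg_five {p : ℕ} [Fact p.Prime] (hsq : IsSquare ((-5 : ℤ) : ZMod p)) :
    IsSqAddFiveSq p ∨ IsSqAddFiveSq (2 * p) := by
  have hp : p.Prime := Fact.out
  obtain ⟨z, hz⟩ := hsq
  obtain ⟨a, b, hab0, ha, hb, habz⟩ := ZMod.exists_intCast_eq_mul_natAbs_le_sqrt z
  obtain ⟨k, hk⟩ : (p : ℤ) ∣ a ^ 2 + 5 * b ^ 2 := by
    rw [← ZMod.intCast_zmod_eq_zero_iff_dvd]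
    push_cast at hz ⊢
    rw [habz]
    linear_combination -(b : ZMod p) ^ 2 * hz
  set r := p.sqrt
  have hr : r ^ 2 < p := lt_of_le_of_ne (Nat.sqrt_le' p) fun h =>
    hp.not_isSquare ⟨r, by rw [← h, sq]⟩
  have ha' : a ^ 2 ≤ (r : ℤ) ^ 2 := by
    rw [← Int.natAbs_sq]; exact_mod_cast Nat.pow_le_pow_left ha 2
  have hb' : b ^ 2 ≤ (r : ℤ) ^ 2 := by
    rw [← Int.natAbs_sq]; exact_mod_cast Nat.pow_le_pow_left hb 2
  have hpos : 0 < a ^ 2 + 5 * b ^ 2 := by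
    rcases hab0 with h | h <;> positivity
  have hr' : (r : ℤ) ^ 2 < p := by exact_mod_cast hr
  have hk0 : 0 < k := by nlinarith
  have hk6 : k < 6 := by nlinarith
  -- `a² + 5b² = kp` with `0 < k < 6`; for `k = 3` divide by `3` using `2 · 3 = 1² + 5 · 1²`.
  interval_cases k
  · exact .inl ⟨a, b, by linarith⟩
  · exact .inr ⟨a, b, by push_cast; linarith⟩
  · exact .inr <|
      of_prime_mul Nat.prime_three ⟨a, b, by push_cast; linarith⟩ ⟨1, 1, by norm_num⟩
  · exact .inl (four_mul_iff.mp ⟨a, b, by push_cast; linarith⟩)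
  · exact .inl (five_mul_iff.mp ⟨a, b, by push_cast; linarith⟩)

theorem prime_of_mod_twenty {p : ℕ} [Fact p.Prime] (h : p % 20 = 1 ∨ p % 20 = 9) :
    IsSqAddFiveSq p :=
  (of_isSquare_neg_five (isSquare_neg_five_of_mod_twenty (by omega))).resolve_right fun h2 => by
    have := h2.mod_eight
    omega

theorem two_mul_prime_of_mod_twenty {p : ℕ} [Fact p.Prime] (h : p % 20 = 3 ∨ p % 20 = 7) :
    IsSqAddFiveSq (2 * p) :=
  (of_isSquare_neg_five (isSquare_neg_five_of_mod_twenty (by omega))).resolve_left fun h1 => by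
    have := h1.mod_eight
    omega

end IsSqAddFiveSq

def EvenInertExponents (n : ℕ) : Prop :=
  ∀ q : ℕ, q.Prime → (q % 20 = 11 ∨ q % 20 = 13 ∨ q % 20 = 17 ∨ q % 20 = 19) →
    Even (n.factorization q)

/-- The primes counted are those lying under the non-principal prime ideals of `ℤ[√-5]`. -/
noncomputable def nonprincipalCount (n : ℕ) : ℕ :=
  n.factorization.sum fun p k => if p = 2 ∨ p % 20 = 3 ∨ p % 20 = 7 then k else 0

def GenusCondition (n : ℕ) : Prop :=
  EvenInertExponents n ∧ Even (nonprincipalCount n)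

theorem evenInertExponents_mul_iff {a b : ℕ} (ha : a ≠ 0) (hb : b ≠ 0)
    (h : EvenInertExponents a) : EvenInertExponents (a * b) ↔ EvenInertExponents b := by
  refine forall_congr' fun q => forall_congr' fun hq => forall_congr' fun hr => ?_
  rw [Nat.factorization_mul ha hb, Finsupp.add_apply, Nat.even_add]
  exact iff_true_left (h q hq hr)

theorem evenInertExponents_prime {p : ℕ} (hp : p.Prime)
    (hr : ¬(p % 20 = 11 ∨ p % 20 = 13 ∨ p % 20 = 17 ∨ p % 20 = 19)) :
    EvenInertExponents p := by
  intro q _ hq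
  rw [hp.factorization, Finsupp.single_apply]
  split_ifs with h
  · exact absurd (h ▸ hq) hr
  · exact ⟨0, rfl⟩

theorem evenInertExponents_mul_self {a : ℕ} (ha : a ≠ 0) : EvenInertExponents (a * a) :=
  fun q _ _ => by
    rw [Nat.factorization_mul ha ha, Finsupp.add_apply]
    exact Even.add_self _

theorem nonprincipalCount_mul {a b : ℕ} (ha : a ≠ 0) (hb : b ≠ 0) :
    nonprincipalCount (a * b) = nonprincipalCount a + nonprincipalCount b := by
  unfold nonprincipalCount
  rw [Nat.factorization_mul ha hb, Finsupp.sum_add_index'] <;> intros <;> split_ifs <;> rfl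

theorem nonprincipalCount_prime {p : ℕ} (hp : p.Prime) :
    nonprincipalCount p = if p = 2 ∨ p % 20 = 3 ∨ p % 20 = 7 then 1 else 0 := by
  unfold nonprincipalCount
  rw [hp.factorization, Finsupp.sum_single_index]
  split_ifs <;> rfl

theorem nonprincipalCount_eq (n : ℕ) :
    nonprincipalCount n = n.factorization 2 +
      ∑ p ∈ n.primeFactors.filter (fun p => p % 20 = 3 ∨ p % 20 = 7), n.factorization p := by
  have hsplit : ∀ p, (if p = 2 ∨ p % 20 = 3 ∨ p % 20 = 7 then n.factorization p else 0) =
      (if p = 2 then n.factorization p else 0) +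
        if p % 20 = 3 ∨ p % 20 = 7 then n.factorization p else 0 := fun p => by
    by_cases h : p = 2 <;> simp [h]
  rw [nonprincipalCount, Finsupp.sum, Nat.support_factorization,
    Finset.sum_congr rfl fun p _ => hsplit p, Finset.sum_add_distrib, Finset.sum_ite_eq',
    Finset.sum_filter]
  congr 1
  split_ifs with h
  · rfl
  · exact (Finsupp.notMem_support_iff.mp (by rwa [Nat.support_factorization])).symm

theorem genusCondition_mul_iff {a t : ℕ} (ha : a ≠ 0) (ht : t ≠ 0) (hE : EvenInertExponents a)
    (hc : Even (nonprincipalCount a)) : GenusCondition (a * t) ↔ GenusCondition t := by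
  rw [GenusCondition, GenusCondition, evenInertExponents_mul_iff ha ht hE,
    nonprincipalCount_mul ha ht, Nat.even_add, iff_true_left hc]

theorem genusCondition_mul_iff_of_odd {a t : ℕ} (ha : a ≠ 0) (ht : t ≠ 0)
    (hE : EvenInertExponents a) (hc : Odd (nonprincipalCount a)) :
    GenusCondition (a * t) ↔ EvenInertExponents t ∧ Odd (nonprincipalCount t) := by
  rw [GenusCondition, evenInertExponents_mul_iff ha ht hE, nonprincipalCount_mul ha ht,
    Nat.even_add', iff_true_left hc]

theorem genusCondition_two_mul_iff {t : ℕ} (ht : t ≠ 0) :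
    GenusCondition (2 * t) ↔ EvenInertExponents t ∧ Odd (nonprincipalCount t) :=
  genusCondition_mul_iff_of_odd two_ne_zero ht (evenInertExponents_prime Nat.prime_two (by decide))
    (by rw [nonprincipalCount_prime Nat.prime_two]; exact odd_one)

theorem genusCondition_one : GenusCondition 1 :=
  ⟨fun q _ _ => by simp, by simp [nonprincipalCount]⟩

theorem not_genusCondition_two : ¬GenusCondition 2 := fun h => by
  have := h.2
  rw [nonprincipalCount_prime Nat.prime_two] at this
  exact Nat.not_even_one this

theorem genusCondition_four_mul_iff {t : ℕ} (ht : t ≠ 0) :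
    GenusCondition (4 * t) ↔ GenusCondition t :=
  genusCondition_mul_iff four_ne_zero ht (evenInertExponents_mul_self two_ne_zero)
    (by rw [show 4 = 2 * 2 from rfl, nonprincipalCount_mul two_ne_zero two_ne_zero]
        exact Even.add_self _)

theorem genusCondition_prime_mul_iff_two_mul {p t : ℕ} (hp : p.Prime) (ht : t ≠ 0)
    (h : p % 20 = 3 ∨ p % 20 = 7) : GenusCondition (p * t) ↔ GenusCondition (2 * t) := by
  rw [genusCondition_mul_iff_of_odd hp.ne_zero ht (evenInertExponents_prime hp (by omega))
      (by rw [nonprincipalCount_prime hp, if_pos (.inr h)]; exact odd_one),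
    genusCondition_two_mul_iff ht]

theorem not_genusCondition_prime_mul {p t : ℕ} (hp : p.Prime) (ht : t ≠ 0) (hpt : ¬p ∣ t)
    (hr : p % 20 = 11 ∨ p % 20 = 13 ∨ p % 20 = 17 ∨ p % 20 = 19) : ¬GenusCondition (p * t) :=
  fun h => by
    have := h.1 p hp hr
    rw [Nat.factorization_mul hp.ne_zero ht, Finsupp.add_apply, hp.factorization_self,
      Nat.factorization_eq_zero_of_not_dvd hpt] at this
    exact Nat.not_even_one this

theorem odd_prime_mul_reduction {p t : ℕ} (hp : p.Prime) (hp2 : p ≠ 2) (ht : t ≠ 0) :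
    (¬IsSqAddFiveSq (p * t) ∧ ¬GenusCondition (p * t)) ∨
      ∃ n, n ≠ 0 ∧ n < p * t ∧ (IsSqAddFiveSq (p * t) ↔ IsSqAddFiveSq n) ∧
        (GenusCondition (p * t) ↔ GenusCondition n) := by
  have := Fact.mk hp
  have hp3 : 3 ≤ p := (hp.two_le).lt_of_ne' hp2
  have hlt : t < p * t := lt_mul_left (Nat.pos_of_ne_zero ht) (by omega)
  obtain rfl | hp5 := eq_or_ne p 5
  · exact .inr ⟨t, ht, hlt, IsSqAddFiveSq.five_mul_iff,
      genusCondition_mul_iff hp.ne_zero ht (evenInertExponents_prime hp (by decide))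
        (by rw [nonprincipalCount_prime hp]; decide)⟩
  have h2 := hp.eq_one_or_self_of_dvd 2
  have h5 := hp.eq_one_or_self_of_dvd 5
  have hclass : (p % 20 = 1 ∨ p % 20 = 9) ∨ (p % 20 = 3 ∨ p % 20 = 7) ∨
      (p % 20 = 11 ∨ p % 20 = 13 ∨ p % 20 = 17 ∨ p % 20 = 19) := by omega
  rcases hclass with hr | hr | hr
  · exact .inr ⟨t, ht, hlt,
      IsSqAddFiveSq.prime_mul_iff hp (IsSqAddFiveSq.prime_of_mod_twenty hr),
      genusCondition_mul_iff hp.ne_zero ht (evenInertExponents_prime hp (by omega))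
        (by rw [nonprincipalCount_prime hp, if_neg (by omega)]; exact ⟨0, rfl⟩)⟩
  · exact .inr ⟨2 * t, by omega, Nat.mul_lt_mul_of_pos_right (by omega) (by omega),
      IsSqAddFiveSq.prime_mul_iff_two_mul hp (IsSqAddFiveSq.two_mul_prime_of_mod_twenty hr),
      genusCondition_prime_mul_iff_two_mul hp ht hr⟩
  · have hS := IsSqAddFiveSq.prime_mul_iff_of_not_isSquare (m := t)
      (not_isSquare_neg_five_of_mod_twenty hr)
    by_cases hpt : p ∣ t
    · obtain ⟨s, rfl⟩ := hpt
      have hs : s ≠ 0 := by rintro rfl; simp at ht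
      refine .inr ⟨s, hs, (lt_mul_left (Nat.pos_of_ne_zero hs) hp.one_lt).trans
        (lt_mul_left (by positivity) hp.one_lt), ?_, ?_⟩
      · rw [hS]
        exact ⟨fun ⟨s', hs', h⟩ => Nat.eq_of_mul_eq_mul_left hp.pos hs' ▸ h,
          fun h => ⟨s, rfl, h⟩⟩
      · rw [← mul_assoc]
        exact genusCondition_mul_iff (mul_ne_zero hp.ne_zero hp.ne_zero) hs
          (evenInertExponents_mul_self hp.ne_zero)
          (by rw [nonprincipalCount_mul hp.ne_zero hp.ne_zero]; exact Even.add_self _)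
    · exact .inl ⟨fun h => hpt (by obtain ⟨s, rfl, -⟩ := hS.mp h; exact dvd_mul_right p s),
        not_genusCondition_prime_mul hp ht hpt hr⟩

theorem eq_one_or_eq_two_or_four_dvd_or_exists_odd_prime_dvd {n : ℕ} (hn : n ≠ 0) :
    n = 1 ∨ n = 2 ∨ 4 ∣ n ∨ ∃ p, p.Prime ∧ p ≠ 2 ∧ p ∣ n := by
  by_contra! h
  obtain ⟨h1, h2, h4, hodd⟩ := h
  obtain ⟨k, rfl⟩ : ∃ k, n = 2 ^ k := ⟨_, Nat.eq_prime_pow_of_unique_prime_dvd hn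
    fun hp hpn => by_contra fun hp2 => hodd _ hp hp2 hpn⟩
  rcases k with _ | _ | k
  · exact h1 rfl
  · exact h2 rfl
  · exact h4 (pow_dvd_pow 2 (by omega : 2 ≤ k + 2))

theorem isSqAddFiveSq_iff_genusCondition {n : ℕ} (hn : n ≠ 0) :
    IsSqAddFiveSq n ↔ GenusCondition n := by
  induction n using Nat.strong_induction_on with
  | _ n ih =>
  rcases eq_one_or_eq_two_or_four_dvd_or_exists_odd_prime_dvd hn with
    rfl | rfl | ⟨t, rfl⟩ | ⟨p, hp, hp2, t, rfl⟩
  · exact iff_of_true ⟨1, 0, by norm_num⟩ genusCondition_one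
  · exact iff_of_false IsSqAddFiveSq.not_two not_genusCondition_two
  · have ht : t ≠ 0 := by omega
    rw [IsSqAddFiveSq.four_mul_iff, genusCondition_four_mul_iff ht, ih t (by omega) ht]
  · rcases odd_prime_mul_reduction hp hp2 (right_ne_zero_of_mul hn) with
      ⟨hS, hG⟩ | ⟨n', hn', hlt, hS, hG⟩
    · exact iff_of_false hS hG
    · rw [hS, hG, ih n' hlt hn']

theorem exists_eq_two_mul_sq_add_two_mul_mul_add_three_mul_sq_iff {m : ℕ} :
    (∃ x y : ℤ, (m : ℤ) = 2 * x ^ 2 + 2 * x * y + 3 * y ^ 2) ↔ IsSqAddFiveSq (2 * m) := by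
  refine ⟨fun ⟨x, y, h⟩ => ⟨2 * x + y, y, by push_cast; linear_combination 2 * h⟩,
    fun ⟨a, b, h⟩ => ?_⟩
  push_cast at h
  have hab : Even (a - b) := by
    have : Even (a ^ 2 + 5 * b ^ 2) := ⟨m, by linarith⟩
    simpa [Int.even_add, Int.even_sub, Int.even_mul, Int.even_pow,
      show ¬Even (5 : ℤ) by decide] using this
  obtain ⟨x, hx⟩ := hab
  exact ⟨x, b, by
    rw [show a = b + 2 * x by linarith] at h
    linarith⟩

theorem repr_by_2x2_2xy_3y2 (m : ℕ) (hm : 0 < m) :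
    (∃ x y : ℤ, (m : ℤ) = 2 * x ^ 2 + 2 * x * y + 3 * y ^ 2) ↔
      (∀ q : ℕ, q.Prime →
          (q % 20 = 11 ∨ q % 20 = 13 ∨ q % 20 = 17 ∨ q % 20 = 19) →
          Even (m.factorization q)) ∧
      Odd (m.factorization 2 +
        ∑ p ∈ m.primeFactors.filter (fun p => p % 20 = 3 ∨ p % 20 = 7),
          m.factorization p) := by
  rw [exists_eq_two_mul_sq_add_two_mul_mul_add_three_mul_sq_iff,
    isSqAddFiveSq_iff_genusCondition (by omega), genusCondition_two_mul_iff hm.ne',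
    nonprincipalCount_eq]
  rfl
end

section
/- For every positive integer m, the equation m = 4x^2 + 4xy + 5y^2 has a solution in integers x, y if and only if both of the following hold: (1) for every prime q with q ≡ 3 or 7 (mod 8), the q-adic valuation of m is even; and (2) either (a) m is odd and the total number of prime factors of m (counted with multiplicity) congruent to 5 mod 8 is odd, or (b) the 2-adic valuation of m equals 2, or (c) the 2-adic valuation of m is at least 4. -/
/-!
Since `4x² + 4xy + 5y² = (2x + y)² + (2y)²`, the integers represented by the form are the sums
`u² + v²` with `v ≡ 2u (mod 4)`. A computation mod 16 shows that a sum of two squares admits such a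
representation (after possibly swapping `u` and `v`) exactly when it is `≡ 5 (mod 8)`,
`≡ 4 (mod 8)` or `≡ 0 (mod 16)`; the last two cases say `v₂(m) = 2` or `v₂(m) ≥ 4`. The first
condition of the theorem is the two-squares criterion, and under it an odd `m` is `≡ 5^S (mod 8)`,
`S` the number of prime factors `≡ 5 (mod 8)`, because odd squares are `≡ 1 (mod 8)`.
-/

theorem exists_form_iff_exists_sq_add_sq_modEq (m : ℤ) :
    (∃ x y : ℤ, m = 4 * x ^ 2 + 4 * x * y + 5 * y ^ 2) ↔
      ∃ u v : ℤ, m = u ^ 2 + v ^ 2 ∧ v ≡ 2 * u [ZMOD 4] := by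
  constructor
  · rintro ⟨x, y, rfl⟩
    exact ⟨2 * x + y, 2 * y, by ring, Int.modEq_iff_dvd.mpr ⟨x, by ring⟩⟩
  · rintro ⟨u, v, rfl, huv⟩
    obtain ⟨k, hk⟩ := huv.dvd
    exact ⟨k, u - 2 * k, by rw [show v = 2 * u - 4 * k by linarith]; ring⟩

theorem ZMod.castHom_four_eq_two_mul_or_iff_val_sq_add_sq :
    ∀ U V : ZMod 16,
      let π := ZMod.castHom (show 4 ∣ 16 by norm_num) (ZMod 4)
      (π V = 2 * π U ∨ π U = 2 * π V) ↔
        ((U ^ 2 + V ^ 2).val % 8 = 5 ∨ (U ^ 2 + V ^ 2).val % 8 = 4 ∨ (U ^ 2 + V ^ 2).val = 0) := by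
  decide

theorem modEq_two_mul_or_modEq_two_mul_iff (u v : ℤ) :
    (v ≡ 2 * u [ZMOD 4] ∨ u ≡ 2 * v [ZMOD 4]) ↔
      ((u ^ 2 + v ^ 2) % 8 = 5 ∨ (u ^ 2 + v ^ 2) % 8 = 4 ∨ (u ^ 2 + v ^ 2) % 16 = 0) := by
  have key := ZMod.castHom_four_eq_two_mul_or_iff_val_sq_add_sq u v
  have hval := ZMod.val_intCast (n := 16) (u ^ 2 + v ^ 2)
  simp only [map_intCast] at key
  push_cast at hval
  have hmod (a b : ℤ) : a ≡ b [ZMOD 4] ↔ (a : ZMod 4) = b :=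
    (ZMod.intCast_eq_intCast_iff a b 4).symm
  simp only [hmod, Int.cast_mul, Int.cast_ofNat, key]
  omega

theorem exists_sq_add_sq_modEq_iff (m : ℤ) :
    (∃ u v : ℤ, m = u ^ 2 + v ^ 2 ∧ v ≡ 2 * u [ZMOD 4]) ↔
      (∃ u v : ℤ, m = u ^ 2 + v ^ 2) ∧ (m % 8 = 5 ∨ m % 8 = 4 ∨ m % 16 = 0) := by
  constructor
  · rintro ⟨u, v, rfl, huv⟩
    exact ⟨⟨u, v, rfl⟩, (modEq_two_mul_or_modEq_two_mul_iff u v).mp (.inl huv)⟩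
  · rintro ⟨⟨u, v, rfl⟩, hm⟩
    rcases (modEq_two_mul_or_modEq_two_mul_iff u v).mpr hm with huv | hvu
    · exact ⟨u, v, rfl, huv⟩
    · exact ⟨v, u, add_comm _ _, hvu⟩

theorem Int.exists_natCast_eq_sq_add_sq_iff (n : ℕ) :
    (∃ u v : ℤ, (n : ℤ) = u ^ 2 + v ^ 2) ↔
      ∀ q : ℕ, q.Prime → q % 4 = 3 → Even (n.factorization q) := by
  have hnat : (∃ u v : ℤ, (n : ℤ) = u ^ 2 + v ^ 2) ↔ ∃ a b : ℕ, n = a ^ 2 + b ^ 2 := by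
    constructor
    · rintro ⟨u, v, h⟩
      exact ⟨u.natAbs, v.natAbs, by zify; rw [sq_abs, sq_abs, h]⟩
    · rintro ⟨a, b, rfl⟩
      exact ⟨a, b, by push_cast; rfl⟩
  rw [hnat, Nat.eq_sq_add_sq_iff]
  refine ⟨fun h q hq hq4 => ?_, fun h q hq hq4 => ?_⟩
  · by_cases hqn : q ∈ n.primeFactors
    · rw [Nat.factorization_def _ hq]; exact h q hqn hq4
    · rw [Finsupp.notMem_support_iff.mp hqn]; exact Even.zero
  · rw [← Nat.factorization_def _ (Nat.prime_of_mem_primeFactors hq)]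
    exact h q (Nat.prime_of_mem_primeFactors hq) hq4

theorem factorization_two_eq_two_or_four_le_iff {m : ℕ} (hm : m ≠ 0) :
    (m.factorization 2 = 2 ∨ 4 ≤ m.factorization 2) ↔ m % 8 = 4 ∨ m % 16 = 0 := by
  have hdvd (k : ℕ) : 2 ^ k ∣ m ↔ k ≤ m.factorization 2 :=
    Nat.prime_two.pow_dvd_iff_le_factorization hm
  have h4 := hdvd 2
  have h8 := hdvd 3
  have h16 := hdvd 4
  norm_num at h4 h8 h16
  omega

theorem zmod_eight_natCast_pow_eq_one_of_odd_of_even {p k : ℕ} (hp : Odd p) (hk : Even k) :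
    (p : ZMod 8) ^ k = 1 := by
  obtain ⟨j, rfl⟩ := hk
  have hsq : ((p ^ 2 : ℕ) : ZMod 8) = ((1 : ℕ) : ZMod 8) := by
    have := Nat.eight_dvd_sq_sub_one_of_odd hp
    have := pow_pos hp.pos 2
    exact (ZMod.natCast_eq_natCast_iff' _ _ 8).mpr (by omega)
  push_cast at hsq
  rw [← two_mul, pow_mul, hsq, one_pow]

theorem natCast_eq_five_pow_of_odd {m : ℕ} (hm : Odd m)
    (h : ∀ q : ℕ, q.Prime → q % 4 = 3 → Even (m.factorization q)) :
    (m : ZMod 8) = 5 ^ ∑ p ∈ m.primeFactors.filter (· % 8 = 5), m.factorization p := by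
  conv_lhs => rw [← Nat.prod_factorization_pow_eq_self hm.pos.ne']
  rw [Finsupp.prod, Nat.support_factorization, Nat.cast_prod,
    ← Finset.prod_filter_mul_prod_filter_not m.primeFactors (· % 8 = 5),
    ← Finset.prod_pow_eq_pow_sum]
  have five (p : ℕ) (hp : p ∈ m.primeFactors.filter (· % 8 = 5)) :
      ((p ^ m.factorization p : ℕ) : ZMod 8) = 5 ^ m.factorization p := by
    rw [Nat.cast_pow, ← ZMod.natCast_mod, (Finset.mem_filter.mp hp).2]
    rfl
  have one (p : ℕ) (hp : p ∈ m.primeFactors.filter (¬ · % 8 = 5)) :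
      ((p ^ m.factorization p : ℕ) : ZMod 8) = 1 := by
    obtain ⟨hpm, hp5⟩ := Finset.mem_filter.mp hp
    have hpodd : Odd p := hm.of_dvd_nat (Nat.dvd_of_mem_primeFactors hpm)
    rw [Nat.cast_pow]
    by_cases hp1 : p % 8 = 1
    · rw [← ZMod.natCast_mod, hp1, Nat.cast_one, one_pow]
    · refine zmod_eight_natCast_pow_eq_one_of_odd_of_even hpodd
        (h p (Nat.prime_of_mem_primeFactors hpm) ?_)
      have := Nat.odd_iff.mp hpodd
      omega
  rw [Finset.prod_congr rfl five, Finset.prod_eq_one one, mul_one]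

theorem mod_eight_eq_five_iff_odd {m : ℕ} (hm : Odd m)
    (h : ∀ q : ℕ, q.Prime → q % 4 = 3 → Even (m.factorization q)) :
    m % 8 = 5 ↔ Odd (∑ p ∈ m.primeFactors.filter (· % 8 = 5), m.factorization p) := by
  rw [← ZMod.natCast_eq_natCast_iff' m 5 8, natCast_eq_five_pow_of_odd hm h]
  generalize ∑ p ∈ m.primeFactors.filter (· % 8 = 5), m.factorization p = s
  have h25 : (5 : ZMod 8) ^ 2 = 1 := by decide
  obtain ⟨k, rfl | rfl⟩ := Nat.even_or_odd' s
  · rw [pow_mul, h25, one_pow]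
    exact iff_of_false (by decide) (Nat.not_odd_iff_even.mpr (even_two_mul k))
  · rw [pow_succ, pow_mul, h25, one_pow, one_mul]
    exact iff_of_true rfl (odd_two_mul_add_one k)

theorem repr_by_4x2_4xy_5y2 (m : ℕ) (hm : 0 < m) :
    (∃ x y : ℤ, (m : ℤ) = 4 * x ^ 2 + 4 * x * y + 5 * y ^ 2) ↔
      (∀ q : ℕ, q.Prime → (q % 8 = 3 ∨ q % 8 = 7) → Even (m.factorization q)) ∧
      ((Odd m ∧
          Odd (∑ p ∈ m.primeFactors.filter (fun p => p % 8 = 5), m.factorization p)) ∨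
        m.factorization 2 = 2 ∨ 4 ≤ m.factorization 2) := by
  have hq (q : ℕ) : (q % 8 = 3 ∨ q % 8 = 7) ↔ q % 4 = 3 := by omega
  rw [exists_form_iff_exists_sq_add_sq_modEq, exists_sq_add_sq_modEq_iff,
    Int.exists_natCast_eq_sq_add_sq_iff, factorization_two_eq_two_or_four_le_iff hm.ne']
  simp only [hq]
  refine and_congr_right fun h => ?_
  rcases Nat.even_or_odd m with hm2 | hm2
  · have := Nat.even_iff.mp hm2
    simp only [Nat.not_odd_iff_even.mpr hm2, false_and, false_or]
    omega
  · rw [← mod_eight_eq_five_iff_odd hm2 h]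
    have := Nat.odd_iff.mp hm2
    simp only [hm2, true_and]
    omega
end
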